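/- Let X̃₁,…,X̃_m be the right-invariant vector fields on G agreeing with X₁,…,X_m at the identity and X̃^α the corresponding right-invariant differential operators. Then the seminorms ‖φ‖'^∞_{k,α} := ‖σ^k X̃^α φ‖_{L∞(G)} (k ∈ ℕ, α ∈ ℕ^m) are continuous seminorms on S_σ(G), and they induce on S_σ(G) the same topology as the defining seminorms ‖·‖^∞_{k,α} built from left-invariant derivatives. -/

import Mathlib

/-!
Common setting: a connected simply connected solvable Lie group `G` of dimension `m`,
realized (as in the paper) as `𝔢 × 𝔫` where `𝔫` is the nilradical and `𝔢` a complement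
of `𝔫` inside the nilpotent subalgebra `𝔤₀`, with group law
`(t,x)·(t',x') = (t+t', P(t,t') ·_CBH x ·_CBH e^{ad t} x')`.
All of this is encoded in the structure `SolvCtx` below:
* `chart : G ≃ₜ 𝕖 × 𝕟` is the global chart given by the realization (in particular `G`
  is connected and simply connected, being homeomorphic to a euclidean space);
* the group law has the triangular shape above (`chart_mul`) where `nmul` is the
  (Campbell-Baker-Hausdorff) product of the nilradical, `P` the CBH polynomial and
  `A t = e^{ad t}`;
* multiplication and inversion are smooth in the chart (`G` is a Lie group);
* `N` is the nilradical: the (closed, normal, nilpotent) subgroup `{g | (chart g).1 = 0}`;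
* `Ad` is the adjoint representation: the differential at the identity of conjugation;
* `c i : ℝ → G` are the one-parameter subgroups `t ↦ exp (t Xᵢ)` of a basis `X₁,…,X_m`
  of the Lie algebra `𝔤` (their derivatives at `0`, read in the chart, form a basis);
* `U` is a symmetric compact neighbourhood of the identity;
* `μ` is the right-invariant Haar measure `dg`.
-/

open MeasureTheory Pointwise Topology

noncomputable section

/-- The word length `|g| = min {j | g ∈ U^j}` of `g` with respect to a subset `U` of a
group (with the convention `U^0 = {1}`). -/
def wordLength {G : Type*} [Group G] (U : Set G) (g : G) : ℕ :=
  sInf {j : ℕ | g ∈ U ^ j}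

/-- The left-invariant derivative along a one-parameter subgroup `c`:
`(X φ)(g) = (d/dt) φ(g · c(t)) |_{t=0}`. -/
def lieDeriv {G : Type*} [Group G] (c : ℝ → G) (φ : G → ℂ) : G → ℂ :=
  fun g => deriv (fun t : ℝ => φ (g * c t)) 0

/-- A connected simply connected solvable Lie group `G`, given in the realization
`G = 𝔢 × 𝔫` of the paper, together with all the attendant data. -/
structure SolvCtx (𝕖 𝕟 : Type*) [NormedAddCommGroup 𝕖] [NormedSpace ℝ 𝕖]
    [NormedAddCommGroup 𝕟] [NormedSpace ℝ 𝕟] (ι : Type*) [Fintype ι]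
    (G : Type*) [Group G] [TopologicalSpace G] [IsTopologicalGroup G]
    [MeasurableSpace G] [BorelSpace G] : Type _ where
  chart : G ≃ₜ 𝕖 × 𝕟
  nmul : 𝕟 → 𝕟 → 𝕟
  P : 𝕖 → 𝕖 → 𝕟
  A : 𝕖 → 𝕟 →L[ℝ] 𝕟
  Ad : G →* (𝕖 × 𝕟) →L[ℝ] 𝕖 × 𝕟
  c : ι → ℝ → G
  U : Set G
  μ : Measure G
  N : Subgroup G
  findim_e : FiniteDimensional ℝ 𝕖
  findim_n : FiniteDimensional ℝ 𝕟
  dim_n_pos : 0 < Module.finrank ℝ 𝕟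
  solvable : IsSolvable G
  chart_one : chart 1 = 0
  chart_mul : ∀ g g' : G, chart (g * g') =
    ((chart g).1 + (chart g').1,
      nmul (P (chart g).1 (chart g').1) (nmul (chart g).2 (A (chart g).1 (chart g').2)))
  P_zero : P 0 0 = 0
  A_zero : A 0 = ContinuousLinearMap.id ℝ 𝕟
  smooth_mul : ContDiff ℝ (⊤ : ℕ∞) fun p : (𝕖 × 𝕟) × 𝕖 × 𝕟 =>
    chart (chart.symm p.1 * chart.symm p.2)
  smooth_inv : ContDiff ℝ (⊤ : ℕ∞) fun x : 𝕖 × 𝕟 => chart (chart.symm x)⁻¹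
  mem_N : ∀ g : G, g ∈ N ↔ (chart g).1 = 0
  N_nilpotent : Group.IsNilpotent ↥N
  N_normal : N.Normal
  Ad_spec : ∀ g : G,
    HasFDerivAt (fun x : 𝕖 × 𝕟 => chart (g * chart.symm x * g⁻¹)) (Ad g) 0
  c_hom : ∀ (i : ι) (s t : ℝ), c i (s + t) = c i s * c i t
  c_smooth : ∀ i : ι, ContDiff ℝ (⊤ : ℕ∞) fun t : ℝ => chart (c i t)
  c_indep : LinearIndependent ℝ fun i : ι => deriv (fun t : ℝ => chart (c i t)) 0
  c_span : Submodule.span ℝ (Set.range fun i : ι => deriv (fun t : ℝ => chart (c i t)) 0) = ⊤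
  U_compact : IsCompact U
  U_symm : U⁻¹ = U
  U_mem_nhds : U ∈ nhds (1 : G)
  μ_right_invariant : μ.IsMulRightInvariant
  μ_open_pos : μ.IsOpenPosMeasure
  μ_finite_compacts : IsFiniteMeasureOnCompacts μ

namespace SolvCtx

variable {𝕖 𝕟 : Type*} [NormedAddCommGroup 𝕖] [NormedSpace ℝ 𝕖]
  [NormedAddCommGroup 𝕟] [NormedSpace ℝ 𝕟] {ι : Type*} [Fintype ι]
  {G : Type*} [Group G] [TopologicalSpace G] [IsTopologicalGroup G]
  [MeasurableSpace G] [BorelSpace G]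

variable (C : SolvCtx 𝕖 𝕟 ι G)

/-- The length `|g|_G` of `g ∈ G`, w.r.t. the compact neighbourhood `U`. -/
def lenG (g : G) : ℕ := wordLength C.U g

/-- The intrinsic length `|n|_N` on the nilradical, w.r.t. `V = U ∩ N`. -/
def lenN (g : G) : ℕ := wordLength (C.U ∩ (C.N : Set G)) g

/-- The `𝔫`-component of `g = (t,n)`, i.e. the element `(0,n)` of the nilradical. -/
def nPart (g : G) : G := C.chart.symm (0, (C.chart g).2)

/-- The weight function
`σ(g) = max(‖Ad g‖, ‖Ad g⁻¹‖) · (1 + |g|_G + |n|_N)` for `g = (t,n)`. -/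
def sigma (g : G) : ℝ :=
  max ‖C.Ad g‖ ‖C.Ad g⁻¹‖ * (1 + (C.lenG g : ℝ) + (C.lenN (C.nPart g) : ℝ))

/-- `φ : G → ℂ` is a smooth (`C^∞`) function on `G` (read through the global chart). -/
def IsSmooth (φ : G → ℂ) : Prop :=
  ContDiff ℝ (⊤ : ℕ∞) fun x : 𝕖 × 𝕟 => φ (C.chart.symm x)

/-- The left-invariant differential operator `X^α = X₁^{α₁} ⋯ X_m^{α_m}` attached to the
multi-index `α`. -/
def Xop [LinearOrder ι] (α : ι → ℕ) : (G → ℂ) → G → ℂ :=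
  ((Finset.sort (Finset.univ : Finset ι) (· ≤ ·)).map
      fun i : ι => (lieDeriv (C.c i))^[α i]).foldr (· ∘ ·) id

/-- The seminorm `‖φ‖^∞_{k,α} = ‖w^k X^α φ‖_{L^∞}`, for a general weight `w`. -/
def snormW [LinearOrder ι] (w : G → ℝ) (k : ℕ) (α : ι → ℕ) (φ : G → ℂ) : ℝ :=
  ⨆ g : G, w g ^ k * ‖C.Xop α φ g‖

/-- The seminorm `‖φ‖^∞_{k,α} = ‖σ^k X^α φ‖_{L^∞}`. -/
def snorm [LinearOrder ι] (k : ℕ) (α : ι → ℕ) (φ : G → ℂ) : ℝ :=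
  C.snormW C.sigma k α φ

/-- Membership in `S_w(G)`: `φ` is smooth and `‖w^k X^α φ‖_{L^∞} < ∞` for all `k, α`. -/
def IsSchwartzW [LinearOrder ι] (w : G → ℝ) (φ : G → ℂ) : Prop :=
  C.IsSmooth φ ∧ ∀ (k : ℕ) (α : ι → ℕ), ∃ B : ℝ, ∀ g : G, w g ^ k * ‖C.Xop α φ g‖ ≤ B

/-- Membership in `S_σ(G)`: smooth functions decreasing `σ`-rapidly at infinity. -/
def IsSchwartz [LinearOrder ι] (φ : G → ℂ) : Prop :=
  C.IsSchwartzW C.sigma φ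

/-- Convolution with respect to the right Haar measure:
`(φ * ψ)(g) = ∫ φ(g h⁻¹) ψ(h) dh`. -/
def conv (φ ψ : G → ℂ) : G → ℂ := fun g => ∫ h, φ (g * h⁻¹) * ψ h ∂C.μ

/-- The modular function `δ(g) = |det Ad(g)|`. -/
def modular (g : G) : ℝ :=
  |LinearMap.det ((C.Ad g : (𝕖 × 𝕟) →L[ℝ] 𝕖 × 𝕟) : (𝕖 × 𝕟) →ₗ[ℝ] 𝕖 × 𝕟)|

/-- The `L¹`-involution `φ*(g) = conj (φ(g⁻¹)) δ(g⁻¹)`. -/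
def invol (φ : G → ℂ) : G → ℂ :=
  fun g => (starRingEnd ℂ) (φ g⁻¹) * ((C.modular g⁻¹ : ℝ) : ℂ)

end SolvCtx

/-- The right-invariant derivative along a one-parameter subgroup `c`:
`(X̃ φ)(g) = (d/dt) φ(c(t) · g) |_{t=0}`.  `X̃` agrees with the corresponding
left-invariant vector field at the identity. -/
noncomputable def rieDeriv {G : Type*} [Group G] (c : ℝ → G) (φ : G → ℂ) : G → ℂ :=
  fun g => deriv (fun t : ℝ => φ (c t * g)) 0

namespace SolvCtx

variable {𝕖 𝕟 : Type*} [NormedAddCommGroup 𝕖] [NormedSpace ℝ 𝕖]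
  [NormedAddCommGroup 𝕟] [NormedSpace ℝ 𝕟] {ι : Type*} [Fintype ι] [LinearOrder ι]
  {G : Type*} [Group G] [TopologicalSpace G] [IsTopologicalGroup G]
  [MeasurableSpace G] [BorelSpace G]

/-- The right-invariant differential operator `X̃^α = X̃₁^{α₁} ⋯ X̃_m^{α_m}`. -/
noncomputable def XopR (C : SolvCtx 𝕖 𝕟 ι G) (α : ι → ℕ) : (G → ℂ) → G → ℂ :=
  ((Finset.sort (Finset.univ : Finset ι) (· ≤ ·)).map
      fun i : ι => (rieDeriv (C.c i))^[α i]).foldr (· ∘ ·) id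

/-- The seminorm `‖φ‖'^∞_{k,α} = ‖σ^k X̃^α φ‖_{L^∞}` built from right-invariant
derivatives. -/
noncomputable def snormR (C : SolvCtx 𝕖 𝕟 ι G) (k : ℕ) (α : ι → ℕ) (φ : G → ℂ) : ℝ :=
  ⨆ g : G, C.sigma g ^ k * ‖C.XopR α φ g‖

end SolvCtx

/-! ### Auxiliary development -/

section AuxTop

lemma SolvCtx.one_le_coe_top : (1 : WithTop ℕ∞) ≤ ((⊤ : ℕ∞) : WithTop ℕ∞) := by
  exact_mod_cast (le_top : (1 : ℕ∞) ≤ ⊤)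

lemma SolvCtx.coe_top_add_one : ((⊤ : ℕ∞) : WithTop ℕ∞) + 1 ≤ ((⊤ : ℕ∞) : WithTop ℕ∞) := by
  exact_mod_cast (le_top : ((⊤ : ℕ∞) + 1 : ℕ∞) ≤ ⊤)

lemma SolvCtx.coe_top_ne_zero' : ((⊤ : ℕ∞) : WithTop ℕ∞) ≠ 0 := by
  exact_mod_cast (ENat.top_ne_zero : (⊤ : ℕ∞) ≠ 0)

end AuxTop

namespace SolvCtx

variable {𝕖 𝕟 : Type*} [NormedAddCommGroup 𝕖] [NormedSpace ℝ 𝕖]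
  [NormedAddCommGroup 𝕟] [NormedSpace ℝ 𝕟] {ι : Type*} [Fintype ι]
  {G : Type*} [Group G] [TopologicalSpace G] [IsTopologicalGroup G]
  [MeasurableSpace G] [BorelSpace G]

variable (C : SolvCtx 𝕖 𝕟 ι G)

/-- multiplication read in the chart -/
def mhat (x y : 𝕖 × 𝕟) : 𝕖 × 𝕟 := C.chart (C.chart.symm x * C.chart.symm y)

/-- the one-parameter subgroups read in the chart -/
def cc (i : ι) : ℝ → 𝕖 × 𝕟 := fun t => C.chart (C.c i t)

/-- the basis vectors -/
def vv (i : ι) : 𝕖 × 𝕟 := deriv (C.cc i) 0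

lemma symm_zero : C.chart.symm 0 = 1 := by
  rw [← C.chart_one]; exact C.chart.symm_apply_apply 1

lemma c_zero (i : ι) : C.c i 0 = 1 := by
  have h := C.c_hom i 0 0
  simp only [add_zero] at h
  exact (mul_eq_left.mp h.symm)

lemma cc_smooth (i : ι) : ContDiff ℝ (⊤ : ℕ∞) (C.cc i) := C.c_smooth i

lemma cc_zero (i : ι) : C.cc i 0 = 0 := by
  simp [cc, C.c_zero i, C.chart_one]

lemma hasDerivAt_cc (i : ι) : HasDerivAt (C.cc i) (C.vv i) 0 :=
  (((C.cc_smooth i).differentiable coe_top_ne_zero') 0).hasDerivAt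

lemma mhat_smooth : ContDiff ℝ (⊤ : ℕ∞) (fun p : (𝕖 × 𝕟) × 𝕖 × 𝕟 => C.mhat p.1 p.2) :=
  C.smooth_mul

lemma chart_mul'' (g h : G) : C.chart (g * h) = C.mhat (C.chart g) (C.chart h) := by
  simp [mhat]

lemma mhat_zero_left (y : 𝕖 × 𝕟) : C.mhat 0 y = y := by
  simp [mhat, C.symm_zero]

lemma mhat_zero_right (x : 𝕖 × 𝕟) : C.mhat x 0 = x := by
  simp [mhat, C.symm_zero]

/-- left slice `y ↦ φ(g ·(chart⁻¹ y))` -/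
def lslice (φ : G → ℂ) (g : G) : 𝕖 × 𝕟 → ℂ := fun y => φ (g * C.chart.symm y)

/-- right slice `y ↦ φ((chart⁻¹ y) · g)` -/
def rslice (φ : G → ℂ) (g : G) : 𝕖 × 𝕟 → ℂ := fun y => φ (C.chart.symm y * g)

lemma lslice_smooth {φ : G → ℂ} (hφ : C.IsSmooth φ) (g : G) :
    ContDiff ℝ (⊤ : ℕ∞) (C.lslice φ g) := by
  have : C.lslice φ g = (fun x => φ (C.chart.symm x)) ∘ (fun y => C.mhat (C.chart g) y) := by
    funext y
    simp [Function.comp, lslice, mhat, C.chart.symm_apply_apply]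
  rw [this]
  exact hφ.comp (C.mhat_smooth.comp (contDiff_const.prodMk contDiff_id))

lemma rslice_smooth {φ : G → ℂ} (hφ : C.IsSmooth φ) (g : G) :
    ContDiff ℝ (⊤ : ℕ∞) (C.rslice φ g) := by
  have : C.rslice φ g = (fun x => φ (C.chart.symm x)) ∘ (fun y => C.mhat y (C.chart g)) := by
    funext y
    simp [Function.comp, rslice, mhat, C.chart.symm_apply_apply]
  rw [this]
  exact hφ.comp (C.mhat_smooth.comp (contDiff_id.prodMk contDiff_const))

lemma lieDeriv_eq_fderiv {φ : G → ℂ} (hφ : C.IsSmooth φ) (i : ι) (g : G) :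
    lieDeriv (C.c i) φ g = fderiv ℝ (C.lslice φ g) 0 (C.vv i) := by
  have hcomp : (fun t : ℝ => φ (g * C.c i t)) = fun t => C.lslice φ g (C.cc i t) := by
    funext t; simp [lslice, cc]
  have h1 : HasFDerivAt (C.lslice φ g) (fderiv ℝ (C.lslice φ g) 0) (C.cc i 0) := by
    rw [C.cc_zero]
    exact (((C.lslice_smooth hφ g).differentiable coe_top_ne_zero') _).hasFDerivAt
  have hd := h1.comp_hasDerivAt 0 (C.hasDerivAt_cc i)
  rw [lieDeriv, hcomp]
  exact hd.deriv

lemma rieDeriv_eq_fderiv {φ : G → ℂ} (hφ : C.IsSmooth φ) (i : ι) (g : G) :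
    rieDeriv (C.c i) φ g = fderiv ℝ (C.rslice φ g) 0 (C.vv i) := by
  have hcomp : (fun t : ℝ => φ (C.c i t * g)) = fun t => C.rslice φ g (C.cc i t) := by
    funext t; simp [rslice, cc]
  have h1 : HasFDerivAt (C.rslice φ g) (fderiv ℝ (C.rslice φ g) 0) (C.cc i 0) := by
    rw [C.cc_zero]
    exact (((C.rslice_smooth hφ g).differentiable coe_top_ne_zero') _).hasFDerivAt
  have hd := h1.comp_hasDerivAt 0 (C.hasDerivAt_cc i)
  rw [rieDeriv, hcomp]
  exact hd.deriv

lemma rieDeriv_eq_fderiv_l {φ : G → ℂ} (hφ : C.IsSmooth φ) (i : ι) (g : G) :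
    rieDeriv (C.c i) φ g = fderiv ℝ (C.lslice φ g) 0 (C.Ad g⁻¹ (C.vv i)) := by
  set κ : 𝕖 × 𝕟 → 𝕖 × 𝕟 := fun x => C.chart (g⁻¹ * C.chart.symm x * g) with hκ
  have hκd : HasFDerivAt κ (C.Ad g⁻¹) 0 := by
    have := C.Ad_spec g⁻¹
    simpa [hκ] using this
  have hcomp : (fun t : ℝ => φ (C.c i t * g)) = fun t => C.lslice φ g (κ (C.cc i t)) := by
    funext t
    simp only [lslice, hκ, cc, C.chart.symm_apply_apply]
    congr 1
    group
  have hκ0 : κ 0 = 0 := by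
    simp [hκ, C.symm_zero, ← C.chart_one]
  have hκd' : HasFDerivAt κ (C.Ad g⁻¹) (C.cc i 0) := by rw [C.cc_zero]; exact hκd
  have hcurve : HasDerivAt (fun t => κ (C.cc i t)) (C.Ad g⁻¹ (C.vv i)) 0 :=
    hκd'.comp_hasDerivAt 0 (C.hasDerivAt_cc i)
  have h1 : HasFDerivAt (C.lslice φ g) (fderiv ℝ (C.lslice φ g) 0) (κ (C.cc i 0)) := by
    rw [C.cc_zero, hκ0]
    exact (((C.lslice_smooth hφ g).differentiable coe_top_ne_zero') _).hasFDerivAt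
  have hd := h1.comp_hasDerivAt 0 hcurve
  rw [rieDeriv, hcomp]
  exact hd.deriv

lemma lieDeriv_eq_fderiv_r {φ : G → ℂ} (hφ : C.IsSmooth φ) (j : ι) (g : G) :
    lieDeriv (C.c j) φ g = fderiv ℝ (C.rslice φ g) 0 (C.Ad g (C.vv j)) := by
  set κ : 𝕖 × 𝕟 → 𝕖 × 𝕟 := fun x => C.chart (g * C.chart.symm x * g⁻¹) with hκ
  have hκd : HasFDerivAt κ (C.Ad g) 0 := C.Ad_spec g
  have hcomp : (fun t : ℝ => φ (g * C.c j t)) = fun t => C.rslice φ g (κ (C.cc j t)) := by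
    funext t
    simp only [rslice, hκ, cc, C.chart.symm_apply_apply]
    congr 1
    group
  have hκ0 : κ 0 = 0 := by
    simp [hκ, C.symm_zero, ← C.chart_one]
  have hκd' : HasFDerivAt κ (C.Ad g) (C.cc j 0) := by rw [C.cc_zero]; exact hκd
  have hcurve : HasDerivAt (fun t => κ (C.cc j t)) (C.Ad g (C.vv j)) 0 :=
    hκd'.comp_hasDerivAt 0 (C.hasDerivAt_cc j)
  have h1 : HasFDerivAt (C.rslice φ g) (fderiv ℝ (C.rslice φ g) 0) (κ (C.cc j 0)) := by
    rw [C.cc_zero, hκ0]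
    exact (((C.rslice_smooth hφ g).differentiable coe_top_ne_zero') _).hasFDerivAt
  have hd := h1.comp_hasDerivAt 0 hcurve
  rw [lieDeriv, hcomp]
  exact hd.deriv

end SolvCtx

section ParamDeriv

open SolvCtx in
/-- smoothness of a parametric derivative at `0` -/
lemma smooth_param_deriv' {E' F'' : Type*} [NormedAddCommGroup E'] [NormedSpace ℝ E']
    [NormedAddCommGroup F''] [NormedSpace ℝ F''] {F : E' × ℝ → F''}
    (hF : ContDiff ℝ (⊤ : ℕ∞) F) :
    ContDiff ℝ (⊤ : ℕ∞) fun x : E' => deriv (fun t => F (x, t)) 0 := by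
  have key : ∀ x : E', deriv (fun t => F (x, t)) 0 = fderiv ℝ F (x, 0) (0, 1) := by
    intro x
    have h1 : HasFDerivAt F (fderiv ℝ F (x, 0)) ((fun t : ℝ => (x, t)) 0) :=
      (hF.differentiable coe_top_ne_zero' _).hasFDerivAt
    have h2 : HasDerivAt (fun t : ℝ => (x, t)) (0, 1) 0 :=
      (hasDerivAt_const 0 x).prodMk (hasDerivAt_id 0)
    exact (h1.comp_hasDerivAt 0 h2).deriv
  simp only [key]
  have hfd : ContDiff ℝ (⊤ : ℕ∞) fun x : E' => fderiv ℝ F (x, 0) :=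
    (hF.fderiv_right coe_top_add_one).comp (contDiff_id.prodMk contDiff_const)
  exact hfd.clm_apply contDiff_const

open SolvCtx in
/-- symmetry of mixed partial derivatives for a smooth function on `ℝ²` -/
lemma deriv_deriv_comm' {F'' : Type*} [NormedAddCommGroup F''] [NormedSpace ℝ F'']
    {f : ℝ × ℝ → F''} (hf : ContDiff ℝ (⊤ : ℕ∞) f) :
    deriv (fun t => deriv (fun s => f (t, s)) 0) 0 =
      deriv (fun s => deriv (fun t => f (t, s)) 0) 0 := by
  have hdiff : Differentiable ℝ f := hf.differentiable coe_top_ne_zero'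
  have hfd : ∀ p, HasFDerivAt f (fderiv ℝ f p) p := fun p => (hdiff p).hasFDerivAt
  have h2 : HasFDerivAt (fderiv ℝ f) (fderiv ℝ (fderiv ℝ f) (0, 0)) ((0 : ℝ), (0 : ℝ)) :=
    (((hf.fderiv_right coe_top_add_one).differentiable coe_top_ne_zero') _).hasFDerivAt
  set H := fderiv ℝ (fderiv ℝ f) ((0 : ℝ), (0 : ℝ)) with hH
  have hsymm := second_derivative_symmetric hfd h2
  have inner1 : ∀ t : ℝ, deriv (fun s => f (t, s)) 0 = fderiv ℝ f (t, 0) ((0 : ℝ), (1 : ℝ)) := by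
    intro t
    have h2' : HasDerivAt (fun s : ℝ => (t, s)) ((0 : ℝ), (1 : ℝ)) 0 :=
      (hasDerivAt_const 0 t).prodMk (hasDerivAt_id 0)
    exact ((hfd (t, 0)).comp_hasDerivAt 0 h2').deriv
  have inner2 : ∀ s : ℝ, deriv (fun t => f (t, s)) 0 = fderiv ℝ f (0, s) ((1 : ℝ), (0 : ℝ)) := by
    intro s
    have h2' : HasDerivAt (fun t : ℝ => (t, s)) ((1 : ℝ), (0 : ℝ)) 0 :=
      (hasDerivAt_id 0).prodMk (hasDerivAt_const 0 s)
    exact ((hfd (0, s)).comp_hasDerivAt 0 h2').deriv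
  have o1 : deriv (fun t => fderiv ℝ f (t, 0) ((0 : ℝ), (1 : ℝ))) 0 = H (1, 0) (0, 1) := by
    have h2' : HasDerivAt (fun t : ℝ => (t, (0 : ℝ))) ((1 : ℝ), (0 : ℝ)) 0 :=
      (hasDerivAt_id 0).prodMk (hasDerivAt_const 0 0)
    have hc : HasDerivAt (fun t : ℝ => fderiv ℝ f (t, 0)) (H (1, 0)) 0 :=
      HasFDerivAt.comp_hasDerivAt 0 (hf := h2') (hl := h2)
    have := hc.clm_apply (hasDerivAt_const (0 : ℝ) ((0 : ℝ), (1 : ℝ)))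
    simpa using this.deriv
  have o2 : deriv (fun s => fderiv ℝ f (0, s) ((1 : ℝ), (0 : ℝ))) 0 = H (0, 1) (1, 0) := by
    have h2' : HasDerivAt (fun s : ℝ => ((0 : ℝ), s)) ((0 : ℝ), (1 : ℝ)) 0 :=
      (hasDerivAt_const 0 0).prodMk (hasDerivAt_id 0)
    have hc : HasDerivAt (fun s : ℝ => fderiv ℝ f (0, s)) (H (0, 1)) 0 :=
      HasFDerivAt.comp_hasDerivAt 0 (hf := h2') (hl := h2)
    have := hc.clm_apply (hasDerivAt_const (0 : ℝ) ((1 : ℝ), (0 : ℝ)))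
    simpa using this.deriv
  simp only [inner1, inner2, o1, o2]
  exact hsymm _ _

open SolvCtx in
/-- second-order chain rule for a mixed partial derivative -/
lemma mix_deriv' {E' F'' : Type*} [NormedAddCommGroup E'] [NormedSpace ℝ E']
    [NormedAddCommGroup F''] [NormedSpace ℝ F'']
    {Φ : E' → F''} (hΦ : ContDiff ℝ (⊤ : ℕ∞) Φ) {q : ℝ → ℝ → E'}
    (hq : ContDiff ℝ (⊤ : ℕ∞) fun p : ℝ × ℝ => q p.1 p.2) (hq0 : q 0 0 = 0) :
    deriv (fun t => deriv (fun s => Φ (q t s)) 0) 0 =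
      fderiv ℝ (fderiv ℝ Φ) 0 (deriv (fun t => q t 0) 0) (deriv (fun s => q 0 s) 0)
        + fderiv ℝ Φ 0 (deriv (fun t => deriv (fun s => q t s) 0) 0) := by
  set w : ℝ → E' := fun t => deriv (fun s => q t s) 0 with hw
  have hqslice : ∀ t : ℝ, ContDiff ℝ (⊤ : ℕ∞) fun s => q t s := fun t =>
    hq.comp (contDiff_const.prodMk contDiff_id)
  have hwq : ∀ t : ℝ, HasDerivAt (fun s => q t s) (w t) 0 := fun t =>
    (((hqslice t).differentiable coe_top_ne_zero') 0).hasDerivAt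
  have step1 : ∀ t : ℝ, deriv (fun s => Φ (q t s)) 0 = fderiv ℝ Φ (q t 0) (w t) := by
    intro t
    exact (((hΦ.differentiable coe_top_ne_zero' _).hasFDerivAt).comp_hasDerivAt 0 (hwq t)).deriv
  have hwsmooth : ContDiff ℝ (⊤ : ℕ∞) w := by
    have : w = fun t : ℝ => deriv (fun s => (fun p : ℝ × ℝ => q p.1 p.2) (t, s)) 0 := rfl
    rw [this]
    exact smooth_param_deriv' hq
  have hcurve0 : ContDiff ℝ (⊤ : ℕ∞) fun t => q t 0 :=
    hq.comp (contDiff_id.prodMk contDiff_const)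
  have hc0 : HasDerivAt (fun t => q t 0) (deriv (fun t => q t 0) 0) 0 :=
    ((hcurve0.differentiable coe_top_ne_zero') 0).hasDerivAt
  have hH : HasFDerivAt (fderiv ℝ Φ) (fderiv ℝ (fderiv ℝ Φ) 0) (q 0 0) := by
    rw [hq0]
    exact (((hΦ.fderiv_right coe_top_add_one).differentiable coe_top_ne_zero') _).hasFDerivAt
  have hc : HasDerivAt (fun t : ℝ => fderiv ℝ Φ (q t 0))
      (fderiv ℝ (fderiv ℝ Φ) 0 (deriv (fun t => q t 0) 0)) 0 :=
    HasFDerivAt.comp_hasDerivAt 0 (hf := hc0) (hl := hH)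
  have hwd : HasDerivAt w (deriv w 0) 0 :=
    ((hwsmooth.differentiable coe_top_ne_zero') 0).hasDerivAt
  have final := (hc.clm_apply hwd).deriv
  simp only [step1]
  rw [final, hq0]

namespace SolvCtx

variable {𝕖 𝕟 : Type*} [NormedAddCommGroup 𝕖] [NormedSpace ℝ 𝕖]
  [NormedAddCommGroup 𝕟] [NormedSpace ℝ 𝕟] {ι : Type*} [Fintype ι]
  {G : Type*} [Group G] [TopologicalSpace G] [IsTopologicalGroup G]
  [MeasurableSpace G] [BorelSpace G]

variable (C : SolvCtx 𝕖 𝕟 ι G)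

/-- the basis of the Lie algebra given by the one-parameter subgroups -/
def bas : Module.Basis ι ℝ (𝕖 × 𝕟) := Module.Basis.mk C.c_indep (C.c_span.ge)

lemma bas_eq (i : ι) : C.bas i = C.vv i := by
  rw [bas, Module.Basis.mk_apply]; rfl

lemma exists_repr_bound : ∃ K > (0 : ℝ), ∀ (x : 𝕖 × 𝕟) (j : ι), |C.bas.repr x j| ≤ K * ‖x‖ := by
  haveI : FiniteDimensional ℝ 𝕖 := C.findim_e
  haveI : FiniteDimensional ℝ 𝕟 := C.findim_n
  set L : ι → (𝕖 × 𝕟) →L[ℝ] ℝ := fun j => LinearMap.toContinuousLinearMap (C.bas.coord j) with hL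
  refine ⟨1 + ∑ j, ‖L j‖, by positivity, fun x j => ?_⟩
  have h1 : |C.bas.repr x j| = ‖L j x‖ := by
    simp [hL, Module.Basis.coord_apply, Real.norm_eq_abs]
  rw [h1]
  calc ‖L j x‖ ≤ ‖L j‖ * ‖x‖ := (L j).le_opNorm x
    _ ≤ (1 + ∑ j', ‖L j'‖) * ‖x‖ := by
        apply mul_le_mul_of_nonneg_right _ (norm_nonneg x)
        have : ‖L j‖ ≤ ∑ j', ‖L j'‖ :=
          Finset.single_le_sum (fun j' _ => norm_nonneg (L j')) (Finset.mem_univ j)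
        linarith
  
/-- first-order expansion of a right-invariant derivative into left-invariant ones -/
lemma rieDeriv_expand {φ : G → ℂ} (hφ : C.IsSmooth φ) (i : ι) (g : G) :
    rieDeriv (C.c i) φ g =
      ∑ j, (C.bas.repr (C.Ad g⁻¹ (C.vv i)) j) • lieDeriv (C.c j) φ g := by
  rw [C.rieDeriv_eq_fderiv_l hφ]
  have hx : (C.Ad g⁻¹) (C.vv i) =
      ∑ j, C.bas.repr (C.Ad g⁻¹ (C.vv i)) j • C.bas j := (C.bas.sum_repr _).symm
  conv_lhs => rw [hx]
  rw [map_sum]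
  refine Finset.sum_congr rfl fun j _ => ?_
  rw [(fderiv ℝ (C.lslice φ g) 0).map_smul, C.bas_eq, ← C.lieDeriv_eq_fderiv hφ]

/-- first-order expansion of a left-invariant derivative into right-invariant ones -/
lemma lieDeriv_expand {φ : G → ℂ} (hφ : C.IsSmooth φ) (j : ι) (g : G) :
    lieDeriv (C.c j) φ g =
      ∑ i, (C.bas.repr (C.Ad g (C.vv j)) i) • rieDeriv (C.c i) φ g := by
  rw [C.lieDeriv_eq_fderiv_r hφ]
  have hx : (C.Ad g) (C.vv j) =
      ∑ i, C.bas.repr (C.Ad g (C.vv j)) i • C.bas i := (C.bas.sum_repr _).symm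
  conv_lhs => rw [hx]
  rw [map_sum]
  refine Finset.sum_congr rfl fun i _ => ?_
  rw [(fderiv ℝ (C.rslice φ g) 0).map_smul, C.bas_eq, ← C.rieDeriv_eq_fderiv hφ]

lemma isSmooth_lieDeriv {φ : G → ℂ} (hφ : C.IsSmooth φ) (i : ι) :
    C.IsSmooth (lieDeriv (C.c i) φ) := by
  set F : (𝕖 × 𝕟) × ℝ → ℂ := fun p => φ (C.chart.symm (C.mhat p.1 (C.cc i p.2))) with hF
  have hFs : ContDiff ℝ (⊤ : ℕ∞) F := by
    apply hφ.comp
    exact C.mhat_smooth.comp (contDiff_fst.prodMk ((C.cc_smooth i).comp contDiff_snd))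
  have key : (fun x : 𝕖 × 𝕟 => lieDeriv (C.c i) φ (C.chart.symm x)) =
      fun x => deriv (fun t => F (x, t)) 0 := by
    funext x
    unfold lieDeriv
    congr 1
    funext t
    simp [hF, mhat, cc, C.chart.symm_apply_apply]
  show ContDiff ℝ (⊤ : ℕ∞) fun x : 𝕖 × 𝕟 => lieDeriv (C.c i) φ (C.chart.symm x)
  rw [key]
  exact smooth_param_deriv' hFs

lemma isSmooth_rieDeriv {φ : G → ℂ} (hφ : C.IsSmooth φ) (i : ι) :
    C.IsSmooth (rieDeriv (C.c i) φ) := by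
  set F : (𝕖 × 𝕟) × ℝ → ℂ := fun p => φ (C.chart.symm (C.mhat (C.cc i p.2) p.1)) with hF
  have hFs : ContDiff ℝ (⊤ : ℕ∞) F := by
    apply hφ.comp
    exact C.mhat_smooth.comp (((C.cc_smooth i).comp contDiff_snd).prodMk contDiff_fst)
  have key : (fun x : 𝕖 × 𝕟 => rieDeriv (C.c i) φ (C.chart.symm x)) =
      fun x => deriv (fun t => F (x, t)) 0 := by
    funext x
    unfold rieDeriv
    congr 1
    funext t
    simp [hF, mhat, cc, C.chart.symm_apply_apply]
  show ContDiff ℝ (⊤ : ℕ∞) fun x : 𝕖 × 𝕟 => rieDeriv (C.c i) φ (C.chart.symm x)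
  rw [key]
  exact smooth_param_deriv' hFs

/-- left and right invariant derivatives commute -/
lemma lie_rie_comm {φ : G → ℂ} (hφ : C.IsSmooth φ) (i j : ι) (g : G) :
    lieDeriv (C.c j) (rieDeriv (C.c i) φ) g = rieDeriv (C.c i) (lieDeriv (C.c j) φ) g := by
  set f : ℝ × ℝ → ℂ := fun p => φ (C.c i p.1 * g * C.c j p.2) with hf
  have hfs : ContDiff ℝ (⊤ : ℕ∞) f := by
    have : f = fun p : ℝ × ℝ =>
        φ (C.chart.symm (C.mhat (C.mhat (C.cc i p.1) (C.chart g)) (C.cc j p.2))) := by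
      funext p
      simp [hf, mhat, cc, C.chart.symm_apply_apply]
    rw [this]
    exact hφ.comp (C.mhat_smooth.comp (ContDiff.prodMk
      (C.mhat_smooth.comp (((C.cc_smooth i).comp contDiff_fst).prodMk contDiff_const))
      ((C.cc_smooth j).comp contDiff_snd)))
  have lhs : lieDeriv (C.c j) (rieDeriv (C.c i) φ) g =
      deriv (fun s => deriv (fun t => f (t, s)) 0) 0 := by
    unfold lieDeriv rieDeriv
    congr 1
    funext s
    congr 1
    funext t
    simp [hf, mul_assoc]
  have rhs : rieDeriv (C.c i) (lieDeriv (C.c j) φ) g =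
      deriv (fun t => deriv (fun s => f (t, s)) 0) 0 := by
    unfold lieDeriv rieDeriv
    congr 1
  rw [lhs, rhs]
  exact (deriv_deriv_comm' hfs).symm

end SolvCtx

namespace SolvCtx

variable {𝕖 𝕟 : Type*} [NormedAddCommGroup 𝕖] [NormedSpace ℝ 𝕖]
  [NormedAddCommGroup 𝕟] [NormedSpace ℝ 𝕟] {ι : Type*} [Fintype ι]
  {G : Type*} [Group G] [TopologicalSpace G] [IsTopologicalGroup G]
  [MeasurableSpace G] [BorelSpace G]

variable (C : SolvCtx 𝕖 𝕟 ι G)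

/-- mixed second derivative of multiplication (left version) -/
def Wl (i j : ι) : 𝕖 × 𝕟 :=
  deriv (fun t => deriv (fun s => C.mhat (C.cc i t) (C.cc j s)) 0) 0

/-- mixed second derivative of multiplication (right version) -/
def Wr (i j : ι) : 𝕖 × 𝕟 :=
  deriv (fun t => deriv (fun s => C.mhat (C.cc j s) (C.cc i t)) 0) 0

lemma qsmooth_l (i j : ι) :
    ContDiff ℝ (⊤ : ℕ∞) fun p : ℝ × ℝ => C.mhat (C.cc i p.1) (C.cc j p.2) :=
  C.mhat_smooth.comp (((C.cc_smooth i).comp contDiff_fst).prodMk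
    ((C.cc_smooth j).comp contDiff_snd))

lemma qsmooth_r (i j : ι) :
    ContDiff ℝ (⊤ : ℕ∞) fun p : ℝ × ℝ => C.mhat (C.cc j p.2) (C.cc i p.1) :=
  C.mhat_smooth.comp (((C.cc_smooth j).comp contDiff_snd).prodMk
    ((C.cc_smooth i).comp contDiff_fst))

lemma lie_lie_eq {φ : G → ℂ} (hφ : C.IsSmooth φ) (i j : ι) (g : G) :
    lieDeriv (C.c i) (lieDeriv (C.c j) φ) g =
      fderiv ℝ (fderiv ℝ (C.lslice φ g)) 0 (C.vv i) (C.vv j)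
        + fderiv ℝ (C.lslice φ g) 0 (C.Wl i j) := by
  set q : ℝ → ℝ → 𝕖 × 𝕟 := fun t s => C.mhat (C.cc i t) (C.cc j s) with hq
  have hql : ∀ t : ℝ, q t 0 = C.cc i t := by
    intro t; simp [hq, C.cc_zero, C.mhat_zero_right]
  have hqr : ∀ s : ℝ, q 0 s = C.cc j s := by
    intro s; simp [hq, C.cc_zero, C.mhat_zero_left]
  have hq0 : q 0 0 = 0 := by rw [hql 0, C.cc_zero]
  have lhs : lieDeriv (C.c i) (lieDeriv (C.c j) φ) g =
      deriv (fun t => deriv (fun s => C.lslice φ g (q t s)) 0) 0 := by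
    unfold lieDeriv
    congr 1
    funext t
    congr 1
    funext s
    simp only [lslice, hq, mhat, cc, C.chart.symm_apply_apply]
    rw [mul_assoc]
  have hmix := mix_deriv' (C.lslice_smooth hφ g) (C.qsmooth_l i j) hq0
  rw [lhs, hmix]
  congr 2
  · rw [show (fun t => q t 0) = C.cc i from funext hql]; rfl
  · rw [show (fun s => q 0 s) = C.cc j from funext hqr]; rfl

lemma rie_rie_eq {φ : G → ℂ} (hφ : C.IsSmooth φ) (i j : ι) (g : G) :
    rieDeriv (C.c i) (rieDeriv (C.c j) φ) g =
      fderiv ℝ (fderiv ℝ (C.rslice φ g)) 0 (C.vv i) (C.vv j)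
        + fderiv ℝ (C.rslice φ g) 0 (C.Wr i j) := by
  set q : ℝ → ℝ → 𝕖 × 𝕟 := fun t s => C.mhat (C.cc j s) (C.cc i t) with hq
  have hql : ∀ t : ℝ, q t 0 = C.cc i t := by
    intro t; simp [hq, C.cc_zero, C.mhat_zero_left]
  have hqr : ∀ s : ℝ, q 0 s = C.cc j s := by
    intro s; simp [hq, C.cc_zero, C.mhat_zero_right]
  have hq0 : q 0 0 = 0 := by rw [hql 0, C.cc_zero]
  have lhs : rieDeriv (C.c i) (rieDeriv (C.c j) φ) g =
      deriv (fun t => deriv (fun s => C.rslice φ g (q t s)) 0) 0 := by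
    unfold rieDeriv
    congr 1
    funext t
    congr 1
    funext s
    simp only [rslice, hq, mhat, cc, C.chart.symm_apply_apply]
    rw [mul_assoc]
  have hmix := mix_deriv' (C.rslice_smooth hφ g) (C.qsmooth_r i j) hq0
  rw [lhs, hmix]
  congr 2
  · rw [show (fun t => q t 0) = C.cc i from funext hql]; rfl
  · rw [show (fun s => q 0 s) = C.cc j from funext hqr]; rfl

/-- the structure constants (left) -/
def gammaL (i j k : ι) : ℝ := C.bas.repr (C.Wl i j - C.Wl j i) k

/-- the structure constants (right) -/
def gammaR (i j k : ι) : ℝ := C.bas.repr (C.Wr i j - C.Wr j i) k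

lemma lie_comm_rel {φ : G → ℂ} (hφ : C.IsSmooth φ) (i j : ι) (g : G) :
    lieDeriv (C.c i) (lieDeriv (C.c j) φ) g =
      lieDeriv (C.c j) (lieDeriv (C.c i) φ) g
        + ∑ k, (C.gammaL i j k) • lieDeriv (C.c k) φ g := by
  have h1 := C.lie_lie_eq hφ i j g
  have h2 := C.lie_lie_eq hφ j i g
  have hsym : fderiv ℝ (fderiv ℝ (C.lslice φ g)) 0 (C.vv i) (C.vv j) =
      fderiv ℝ (fderiv ℝ (C.lslice φ g)) 0 (C.vv j) (C.vv i) := by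
    have hdiff : Differentiable ℝ (C.lslice φ g) :=
      (C.lslice_smooth hφ g).differentiable coe_top_ne_zero'
    have hfd : ∀ y, HasFDerivAt (C.lslice φ g) (fderiv ℝ (C.lslice φ g) y) y := fun y =>
      (hdiff y).hasFDerivAt
    have h2' : HasFDerivAt (fderiv ℝ (C.lslice φ g))
        (fderiv ℝ (fderiv ℝ (C.lslice φ g)) 0) 0 :=
      ((((C.lslice_smooth hφ g).fderiv_right coe_top_add_one).differentiable
        coe_top_ne_zero') _).hasFDerivAt
    exact second_derivative_symmetric hfd h2' _ _
  have hW : fderiv ℝ (C.lslice φ g) 0 (C.Wl i j) - fderiv ℝ (C.lslice φ g) 0 (C.Wl j i) =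
      ∑ k, (C.gammaL i j k) • lieDeriv (C.c k) φ g := by
    rw [← map_sub]
    have hx : C.Wl i j - C.Wl j i = ∑ k, C.gammaL i j k • C.bas k := by
      conv_lhs => rw [← C.bas.sum_repr (C.Wl i j - C.Wl j i)]
      rfl
    rw [hx, map_sum]
    refine Finset.sum_congr rfl fun k _ => ?_
    rw [(fderiv ℝ (C.lslice φ g) 0).map_smul, C.bas_eq, ← C.lieDeriv_eq_fderiv hφ]
  rw [h1, h2, ← hsym]
  rw [← hW]
  ring
  
lemma rie_comm_rel {φ : G → ℂ} (hφ : C.IsSmooth φ) (i j : ι) (g : G) :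
    rieDeriv (C.c i) (rieDeriv (C.c j) φ) g =
      rieDeriv (C.c j) (rieDeriv (C.c i) φ) g
        + ∑ k, (C.gammaR i j k) • rieDeriv (C.c k) φ g := by
  have h1 := C.rie_rie_eq hφ i j g
  have h2 := C.rie_rie_eq hφ j i g
  have hsym : fderiv ℝ (fderiv ℝ (C.rslice φ g)) 0 (C.vv i) (C.vv j) =
      fderiv ℝ (fderiv ℝ (C.rslice φ g)) 0 (C.vv j) (C.vv i) := by
    have hdiff : Differentiable ℝ (C.rslice φ g) :=
      (C.rslice_smooth hφ g).differentiable coe_top_ne_zero'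
    have hfd : ∀ y, HasFDerivAt (C.rslice φ g) (fderiv ℝ (C.rslice φ g) y) y := fun y =>
      (hdiff y).hasFDerivAt
    have h2' : HasFDerivAt (fderiv ℝ (C.rslice φ g))
        (fderiv ℝ (fderiv ℝ (C.rslice φ g)) 0) 0 :=
      ((((C.rslice_smooth hφ g).fderiv_right coe_top_add_one).differentiable
        coe_top_ne_zero') _).hasFDerivAt
    exact second_derivative_symmetric hfd h2' _ _
  have hW : fderiv ℝ (C.rslice φ g) 0 (C.Wr i j) - fderiv ℝ (C.rslice φ g) 0 (C.Wr j i) =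
      ∑ k, (C.gammaR i j k) • rieDeriv (C.c k) φ g := by
    rw [← map_sub]
    have hx : C.Wr i j - C.Wr j i = ∑ k, C.gammaR i j k • C.bas k := by
      conv_lhs => rw [← C.bas.sum_repr (C.Wr i j - C.Wr j i)]
      rfl
    rw [hx, map_sum]
    refine Finset.sum_congr rfl fun k _ => ?_
    rw [(fderiv ℝ (C.rslice φ g) 0).map_smul, C.bas_eq, ← C.rieDeriv_eq_fderiv hφ]
  rw [h1, h2, ← hsym]
  rw [← hW]
  ring

end SolvCtx

namespace SolvCtx

variable {𝕖 𝕟 : Type*} [NormedAddCommGroup 𝕖] [NormedSpace ℝ 𝕖]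
  [NormedAddCommGroup 𝕟] [NormedSpace ℝ 𝕟] {ι : Type*} [Fintype ι]
  {G : Type*} [Group G] [TopologicalSpace G] [IsTopologicalGroup G]
  [MeasurableSpace G] [BorelSpace G]

variable (C : SolvCtx 𝕖 𝕟 ι G)

lemma diffAt_lie {φ : G → ℂ} (hφ : C.IsSmooth φ) (i : ι) (g : G) :
    DifferentiableAt ℝ (fun t => φ (g * C.c i t)) 0 := by
  have : (fun t => φ (g * C.c i t)) = C.lslice φ g ∘ C.cc i := by
    funext t; simp [lslice, cc, Function.comp]
  rw [this]
  exact (((C.lslice_smooth hφ g).differentiable coe_top_ne_zero').comp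
    ((C.cc_smooth i).differentiable coe_top_ne_zero')).differentiableAt

lemma diffAt_rie {φ : G → ℂ} (hφ : C.IsSmooth φ) (i : ι) (g : G) :
    DifferentiableAt ℝ (fun t => φ (C.c i t * g)) 0 := by
  have : (fun t => φ (C.c i t * g)) = C.rslice φ g ∘ C.cc i := by
    funext t; simp [rslice, cc, Function.comp]
  rw [this]
  exact (((C.rslice_smooth hφ g).differentiable coe_top_ne_zero').comp
    ((C.cc_smooth i).differentiable coe_top_ne_zero')).differentiableAt

lemma isSmooth_add {φ ψ : G → ℂ} (hφ : C.IsSmooth φ) (hψ : C.IsSmooth ψ) :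
    C.IsSmooth (φ + ψ) := hφ.add hψ

lemma isSmooth_smul (r : ℝ) {φ : G → ℂ} (hφ : C.IsSmooth φ) :
    C.IsSmooth (r • φ) := hφ.const_smul r

lemma isSmooth_sum {κ : Type*} (s : Finset κ) (coef : κ → ℝ) (ψ : κ → G → ℂ)
    (h : ∀ x ∈ s, C.IsSmooth (ψ x)) :
    C.IsSmooth (fun g => ∑ x ∈ s, coef x • ψ x g) := by
  have : (fun y : 𝕖 × 𝕟 => (fun g => ∑ x ∈ s, coef x • ψ x g) (C.chart.symm y)) =
      fun y => ∑ x ∈ s, coef x • ψ x (C.chart.symm y) := rfl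
  show ContDiff ℝ (⊤ : ℕ∞) _
  rw [this]
  exact ContDiff.sum fun x hx => (h x hx).const_smul (coef x)

lemma lieDeriv_add {φ ψ : G → ℂ} (hφ : C.IsSmooth φ) (hψ : C.IsSmooth ψ) (i : ι) :
    lieDeriv (C.c i) (φ + ψ) = lieDeriv (C.c i) φ + lieDeriv (C.c i) ψ := by
  funext g
  show deriv (fun t => φ (g * C.c i t) + ψ (g * C.c i t)) 0 = _
  rw [deriv_fun_add (C.diffAt_lie hφ i g) (C.diffAt_lie hψ i g)]
  rfl

lemma rieDeriv_add {φ ψ : G → ℂ} (hφ : C.IsSmooth φ) (hψ : C.IsSmooth ψ) (i : ι) :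
    rieDeriv (C.c i) (φ + ψ) = rieDeriv (C.c i) φ + rieDeriv (C.c i) ψ := by
  funext g
  show deriv (fun t => φ (C.c i t * g) + ψ (C.c i t * g)) 0 = _
  rw [deriv_fun_add (C.diffAt_rie hφ i g) (C.diffAt_rie hψ i g)]
  rfl

lemma lieDeriv_smul (r : ℝ) {φ : G → ℂ} (hφ : C.IsSmooth φ) (i : ι) :
    lieDeriv (C.c i) (r • φ) = r • lieDeriv (C.c i) φ := by
  funext g
  show deriv (fun t => r • φ (g * C.c i t)) 0 = r • deriv (fun t => φ (g * C.c i t)) 0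
  rw [deriv_fun_const_smul r (C.diffAt_lie hφ i g)]

lemma rieDeriv_smul (r : ℝ) {φ : G → ℂ} (hφ : C.IsSmooth φ) (i : ι) :
    rieDeriv (C.c i) (r • φ) = r • rieDeriv (C.c i) φ := by
  funext g
  show deriv (fun t => r • φ (C.c i t * g)) 0 = r • deriv (fun t => φ (C.c i t * g)) 0
  rw [deriv_fun_const_smul r (C.diffAt_rie hφ i g)]

end SolvCtx

/-- iterated application of a family of operators along a list -/
def opL {ι G : Type*} (Dop : ι → (G → ℂ) → G → ℂ) (L : List ι) (φ : G → ℂ) : G → ℂ :=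
  L.foldr Dop φ

lemma opL_nil {ι G : Type*} (Dop : ι → (G → ℂ) → G → ℂ) (φ : G → ℂ) :
    opL Dop [] φ = φ := rfl

lemma opL_cons {ι G : Type*} (Dop : ι → (G → ℂ) → G → ℂ) (i : ι) (L : List ι) (φ : G → ℂ) :
    opL Dop (i :: L) φ = Dop i (opL Dop L φ) := rfl

lemma opL_append {ι G : Type*} (Dop : ι → (G → ℂ) → G → ℂ) (P Q : List ι) (φ : G → ℂ) :
    opL Dop (P ++ Q) φ = opL Dop P (opL Dop Q φ) := by
  simp [opL, List.foldr_append]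

lemma opL_iterate {ι G : Type*} (Dop : ι → (G → ℂ) → G → ℂ) (i : ι) (n : ℕ) (φ : G → ℂ) :
    (Dop i)^[n] φ = opL Dop (List.replicate n i) φ := by
  induction n with
  | zero => rfl
  | succ n ih =>
      rw [Function.iterate_succ_apply', List.replicate_succ, opL_cons, ih]

/-- the canonical (sorted) word associated to a multi-index -/
def canonWord {ι : Type*} [Fintype ι] [LinearOrder ι] (α : ι → ℕ) : List ι :=
  (Finset.sort (Finset.univ : Finset ι) (· ≤ ·)).flatMap fun i => List.replicate (α i) i

lemma foldr_eq_opL {ι G : Type*} (Dop : ι → (G → ℂ) → G → ℂ) (α : ι → ℕ) (s : List ι)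
    (φ : G → ℂ) :
    ((s.map fun i : ι => (Dop i)^[α i]).foldr (· ∘ ·) id) φ =
      opL Dop (s.flatMap fun i => List.replicate (α i) i) φ := by
  induction s generalizing φ with
  | nil => rfl
  | cons a s ih =>
      simp only [List.map_cons, List.foldr_cons, List.flatMap_cons, opL_append,
        Function.comp_apply]
      rw [ih φ, opL_iterate]

namespace SolvCtx

variable {𝕖 𝕟 : Type*} [NormedAddCommGroup 𝕖] [NormedSpace ℝ 𝕖]
  [NormedAddCommGroup 𝕟] [NormedSpace ℝ 𝕟] {ι : Type*} [Fintype ι] [LinearOrder ι]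
  {G : Type*} [Group G] [TopologicalSpace G] [IsTopologicalGroup G]
  [MeasurableSpace G] [BorelSpace G]

variable (C : SolvCtx 𝕖 𝕟 ι G)

lemma Xop_eq_opL (α : ι → ℕ) (φ : G → ℂ) :
    C.Xop α φ = opL (fun i => lieDeriv (C.c i)) (canonWord α) φ :=
  foldr_eq_opL _ α _ φ

lemma XopR_eq_opL (α : ι → ℕ) (φ : G → ℂ) :
    C.XopR α φ = opL (fun i => rieDeriv (C.c i)) (canonWord α) φ :=
  foldr_eq_opL _ α _ φ

end SolvCtx

section ListComb

variable {ι : Type*} [LinearOrder ι]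

/-- number of inversions of a list -/
def invCount : List ι → ℕ
  | [] => 0
  | a :: l => l.countP (fun b => decide (b < a)) + invCount l

lemma exists_adjacent_inversion :
    ∀ {M : List ι}, ¬ M.Pairwise (· ≤ ·) →
      ∃ (A : List ι) (a b : ι) (B : List ι), M = A ++ a :: b :: B ∧ ¬ a ≤ b := by
  intro M
  induction M with
  | nil => intro h; exact absurd List.Pairwise.nil h
  | cons x l ih =>
      intro h
      by_cases hl : l.Pairwise (· ≤ ·)
      · match l, hl with
        | [], _ => exact absurd (List.pairwise_singleton _ x) h
        | b :: l', hl =>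
            by_cases hxb : x ≤ b
            · exfalso
              apply h
              rw [List.pairwise_cons]
              refine ⟨fun y hy => ?_, hl⟩
              rcases List.mem_cons.mp hy with rfl | hy'
              · exact hxb
              · exact le_trans hxb (List.rel_of_pairwise_cons hl hy')
            · exact ⟨[], x, b, l', rfl, hxb⟩
      · obtain ⟨A, a, b, B, heq, hab⟩ := ih hl
        exact ⟨x :: A, a, b, B, by rw [heq]; rfl, hab⟩

lemma invCount_perm_aux {a b : ι} (A B : List ι) :
    (A ++ b :: a :: B).Perm (A ++ a :: b :: B) :=
  List.Perm.append_left A (List.Perm.swap a b B)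

lemma invCount_swap_lt {a b : ι} (hba : b < a) (A B : List ι) :
    invCount (A ++ b :: a :: B) < invCount (A ++ a :: b :: B) := by
  induction A with
  | nil =>
      simp only [List.nil_append, invCount, List.countP_cons]
      have h1 : (decide (a < b)) = false := by
        simp [not_lt.mpr hba.le]
      have h2 : (decide (b < a)) = true := by simp [hba]
      rw [h1, h2]
      simp only [if_true, Bool.false_eq_true, if_false]
      omega
  | cons x A ih =>
      simp only [List.cons_append, invCount, List.append_eq]
      have hperm := List.Perm.countP_eq
        (fun y => decide (y < x)) (invCount_perm_aux (a := a) (b := b) A B)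
      rw [hperm]
      exact Nat.add_lt_add_left ih _

lemma invCount_le_sq : ∀ M : List ι, invCount M ≤ M.length * M.length := by
  intro M
  induction M with
  | nil => simp [invCount]
  | cons a l ih =>
      simp only [invCount, List.length_cons]
      have h1 : l.countP (fun b => decide (b < a)) ≤ l.length := List.countP_le_length
      nlinarith [ih]

end ListComb

section CanonWord

variable {ι : Type*} [Fintype ι] [LinearOrder ι]

lemma flatMap_replicate_sorted (α : ι → ℕ) :
    ∀ (l : List ι), l.Pairwise (· ≤ ·) →
      (l.flatMap fun i => List.replicate (α i) i).Pairwise (· ≤ ·) := by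
  intro l
  induction l with
  | nil => intro _; exact List.Pairwise.nil
  | cons a l ih =>
      intro hs
      rw [List.pairwise_cons] at hs
      obtain ⟨hal, hl⟩ := hs
      rw [List.flatMap_cons]
      rw [List.pairwise_append]
      refine ⟨?_, ih hl, ?_⟩
      · exact List.pairwise_replicate.mpr (Or.inr le_rfl)
      · intro x hx y hy
        have hxa : x = a := List.eq_of_mem_replicate hx
        obtain ⟨i, hi, hyi⟩ := List.mem_flatMap.mp hy
        have hyi' : y = i := List.eq_of_mem_replicate hyi
        rw [hxa, hyi']
        exact hal i hi

lemma sorted_canonWord (α : ι → ℕ) : (canonWord α).Pairwise (· ≤ ·) :=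
  flatMap_replicate_sorted α _ (Finset.pairwise_sort _ _)

lemma count_flatMap_replicate_notmem (α : ι → ℕ) (j : ι) :
    ∀ (l : List ι), j ∉ l → (l.flatMap fun i => List.replicate (α i) i).count j = 0 := by
  intro l
  induction l with
  | nil => intro _; rfl
  | cons a l ih =>
      intro hj
      rw [List.flatMap_cons, List.count_append]
      have h1 : List.count j (List.replicate (α a) a) = 0 := by
        rw [List.count_eq_zero]
        intro hmem
        exact hj (by rw [List.eq_of_mem_replicate hmem]; exact List.mem_cons_self)
      rw [h1, ih (fun h => hj (List.mem_cons_of_mem a h))]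

lemma count_flatMap_replicate (α : ι → ℕ) (j : ι) :
    ∀ (l : List ι), l.Nodup → j ∈ l →
      (l.flatMap fun i => List.replicate (α i) i).count j = α j := by
  intro l
  induction l with
  | nil => intro _ h; exact absurd h List.not_mem_nil
  | cons a l ih =>
      intro hnd hj
      rw [List.flatMap_cons, List.count_append]
      rw [List.nodup_cons] at hnd
      rcases List.mem_cons.mp hj with rfl | hj'
      · rw [List.count_replicate_self,
          count_flatMap_replicate_notmem α j l hnd.1, add_zero]
      · have h1 : List.count j (List.replicate (α a) a) = 0 := by
          rw [List.count_eq_zero]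
          intro hmem
          exact hnd.1 (by rw [← List.eq_of_mem_replicate hmem]; exact hj')
        rw [h1, ih hnd.2 hj', zero_add]

lemma count_canonWord (α : ι → ℕ) (j : ι) : (canonWord α).count j = α j :=
  count_flatMap_replicate α j _ ((Finset.sort_nodup _ _)) (by
    rw [Finset.mem_sort]; exact Finset.mem_univ j)

lemma sorted_eq_canonWord {T : List ι} (hT : T.Pairwise (· ≤ ·)) :
    canonWord (fun i => T.count i) = T := by
  apply List.Perm.eq_of_pairwise' (sorted_canonWord _) hT
  rw [List.perm_iff_count]
  intro j
  exact count_canonWord _ j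

end CanonWord

section Generic

variable {𝕖 𝕟 : Type*} [NormedAddCommGroup 𝕖] [NormedSpace ℝ 𝕖]
  [NormedAddCommGroup 𝕟] [NormedSpace ℝ 𝕟] {ι : Type*} [Fintype ι] [LinearOrder ι]
  {G : Type*} [Group G] [TopologicalSpace G] [IsTopologicalGroup G]
  [MeasurableSpace G] [BorelSpace G]

variable (C : SolvCtx 𝕖 𝕟 ι G) (Dop : ι → (G → ℂ) → G → ℂ) (γ : ι → ι → ι → ℝ)

/-- multi-indices with entries `≤ ℓ` -/
def mSet (ι : Type*) [Fintype ι] [DecidableEq ι] (ℓ : ℕ) : Finset (ι → ℕ) :=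
  Fintype.piFinset fun _ => Finset.range (ℓ + 1)

lemma mSet_mono {ι : Type*} [Fintype ι] [DecidableEq ι] {ℓ ℓ' : ℕ} (h : ℓ ≤ ℓ') :
    mSet ι ℓ ⊆ mSet ι ℓ' := by
  intro β hβ
  rw [mSet, Fintype.mem_piFinset] at hβ ⊢
  intro a
  have := hβ a
  rw [Finset.mem_range] at this ⊢
  omega

section Hyps

lemma opL_smooth (hS : ∀ (i : ι) (φ : G → ℂ), C.IsSmooth φ → C.IsSmooth (Dop i φ))
    (L : List ι) (φ : G → ℂ) (hφ : C.IsSmooth φ) :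
    C.IsSmooth (opL Dop L φ) := by
  induction L with
  | nil => exact hφ
  | cons i L ih => exact hS i _ ih

lemma isSmooth_zero' : C.IsSmooth (0 : G → ℂ) := contDiff_const

lemma Dop_zero
    (hH : ∀ (i : ι) (r : ℝ) (φ : G → ℂ), C.IsSmooth φ → Dop i (r • φ) = r • Dop i φ)
    (i : ι) : Dop i (0 : G → ℂ) = 0 := by
  have h := hH i 0 (0 : G → ℂ) (isSmooth_zero' C)
  rw [zero_smul] at h
  rw [h, zero_smul]

lemma Dop_sum
    (hA : ∀ (i : ι) (φ ψ : G → ℂ), C.IsSmooth φ → C.IsSmooth ψ →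
      Dop i (φ + ψ) = Dop i φ + Dop i ψ)
    (hH : ∀ (i : ι) (r : ℝ) (φ : G → ℂ), C.IsSmooth φ → Dop i (r • φ) = r • Dop i φ)
    (i : ι) {κ : Type*} (s : Finset κ) (coef : κ → ℝ) (ψ : κ → G → ℂ)
    (hψ : ∀ x ∈ s, C.IsSmooth (ψ x)) :
    Dop i (fun g => ∑ x ∈ s, coef x • ψ x g) = fun g => ∑ x ∈ s, coef x • Dop i (ψ x) g := by
  classical
  induction s using Finset.induction_on with
  | empty =>
      simp only [Finset.sum_empty]
      rw [show (fun _ : G => (0 : ℂ)) = (0 : G → ℂ) from rfl, Dop_zero C Dop hH i]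
  | insert a s ha ih =>
      have hsm1 : C.IsSmooth (coef a • ψ a) :=
        C.isSmooth_smul (coef a) (hψ a (Finset.mem_insert_self a s))
      have hsm2 : C.IsSmooth (fun g => ∑ x ∈ s, coef x • ψ x g) :=
        C.isSmooth_sum s coef ψ (fun x hx => hψ x (Finset.mem_insert_of_mem hx))
      have h1 : (fun g => ∑ x ∈ Insert.insert a s, coef x • ψ x g) =
          (coef a • ψ a) + fun g => ∑ x ∈ s, coef x • ψ x g := by
        funext g
        rw [Finset.sum_insert ha]
        rfl
      rw [h1, hA i _ _ hsm1 hsm2, hH i (coef a) (ψ a) (hψ a (Finset.mem_insert_self a s)),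
        ih (fun x hx => hψ x (Finset.mem_insert_of_mem hx))]
      funext g
      rw [Finset.sum_insert ha]
      rfl

lemma opL_add
    (hS : ∀ (i : ι) (φ : G → ℂ), C.IsSmooth φ → C.IsSmooth (Dop i φ))
    (hA : ∀ (i : ι) (φ ψ : G → ℂ), C.IsSmooth φ → C.IsSmooth ψ →
      Dop i (φ + ψ) = Dop i φ + Dop i ψ)
    (L : List ι) (φ ψ : G → ℂ) (hφ : C.IsSmooth φ) (hψ : C.IsSmooth ψ) :
    opL Dop L (φ + ψ) = opL Dop L φ + opL Dop L ψ := by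
  induction L with
  | nil => rfl
  | cons i L ih =>
      rw [opL_cons, ih, hA i _ _ (opL_smooth C Dop hS L φ hφ) (opL_smooth C Dop hS L ψ hψ)]
      rfl

lemma opL_sum
    (hS : ∀ (i : ι) (φ : G → ℂ), C.IsSmooth φ → C.IsSmooth (Dop i φ))
    (hA : ∀ (i : ι) (φ ψ : G → ℂ), C.IsSmooth φ → C.IsSmooth ψ →
      Dop i (φ + ψ) = Dop i φ + Dop i ψ)
    (hH : ∀ (i : ι) (r : ℝ) (φ : G → ℂ), C.IsSmooth φ → Dop i (r • φ) = r • Dop i φ)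
    (L : List ι) {κ : Type*} (s : Finset κ) (coef : κ → ℝ) (ψ : κ → G → ℂ)
    (hψ : ∀ x ∈ s, C.IsSmooth (ψ x)) :
    opL Dop L (fun g => ∑ x ∈ s, coef x • ψ x g) =
      fun g => ∑ x ∈ s, coef x • opL Dop L (ψ x) g := by
  induction L with
  | nil => rfl
  | cons i L ih =>
      rw [opL_cons, ih, Dop_sum C Dop hA hH i s coef (fun x => opL Dop L (ψ x))
        (fun x hx => opL_smooth C Dop hS L (ψ x) (hψ x hx))]
      rfl

theorem pbw_expand
    (hS : ∀ (i : ι) (φ : G → ℂ), C.IsSmooth φ → C.IsSmooth (Dop i φ))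
    (hA : ∀ (i : ι) (φ ψ : G → ℂ), C.IsSmooth φ → C.IsSmooth ψ →
      Dop i (φ + ψ) = Dop i φ + Dop i ψ)
    (hH : ∀ (i : ι) (r : ℝ) (φ : G → ℂ), C.IsSmooth φ → Dop i (r • φ) = r • Dop i φ)
    (hC : ∀ (i j : ι) (φ : G → ℂ), C.IsSmooth φ →
      Dop i (Dop j φ) = Dop j (Dop i φ) + fun g => ∑ k, γ i j k • Dop k φ g)
    (M : List ι) :
    ∃ d : (ι → ℕ) → ℝ, ∀ (φ : G → ℂ), C.IsSmooth φ → ∀ g : G,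
      opL Dop M φ g = ∑ β ∈ mSet ι M.length, d β • opL Dop (canonWord β) φ g := by
  classical
  suffices Hn : ∀ (n : ℕ) (M : List ι), M.length ^ 3 + invCount M ≤ n →
      ∃ d : (ι → ℕ) → ℝ, ∀ (φ : G → ℂ), C.IsSmooth φ → ∀ g : G,
        opL Dop M φ g = ∑ β ∈ mSet ι M.length, d β • opL Dop (canonWord β) φ g by
    exact Hn _ M le_rfl
  intro n
  induction n using Nat.strong_induction_on with
  | _ n IH =>
    intro M hM
    by_cases hsort : M.Pairwise (· ≤ ·)
    · -- base case: M is sorted, hence a canonical word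
      refine ⟨fun β => if β = (fun i => M.count i) then 1 else 0, fun φ hφ g => ?_⟩
      have hmem : (fun i => M.count i) ∈ mSet ι M.length := by
        rw [mSet, Fintype.mem_piFinset]
        intro i
        rw [Finset.mem_range]
        exact Nat.lt_succ_of_le (List.count_le_length)
      have hrw : ∀ β ∈ mSet ι M.length,
          (if β = (fun i => M.count i) then (1 : ℝ) else 0) • opL Dop (canonWord β) φ g =
            (if β = (fun i => M.count i) then opL Dop (canonWord β) φ g else 0) := by
        intro β _
        by_cases hβ : β = fun i => M.count i
        · rw [if_pos hβ, if_pos hβ, one_smul]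
        · rw [if_neg hβ, if_neg hβ, zero_smul]
      rw [Finset.sum_congr rfl hrw, Finset.sum_ite_eq' (mSet ι M.length) _
        (fun β => opL Dop (canonWord β) φ g), if_pos hmem, sorted_eq_canonWord hsort]
    · -- inductive step
      obtain ⟨A, a, b, B, heq, hab⟩ := exists_adjacent_inversion hsort
      subst heq
      have hba : b < a := not_le.mp hab
      set ℓ := (A ++ a :: b :: B).length with hℓ
      have hlenM : ℓ = A.length + B.length + 2 := by
        simp [hℓ, List.length_append]
        omega
      have hlen₁ : (A ++ b :: a :: B).length = ℓ := by
        simp [hℓ, List.length_append]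
      -- the swapped list
      have hlt₁ : (A ++ b :: a :: B).length ^ 3 + invCount (A ++ b :: a :: B) < n := by
        have h1 := invCount_swap_lt hba A B
        rw [hlen₁]
        have : ℓ ^ 3 + invCount (A ++ b :: a :: B) < ℓ ^ 3 + invCount (A ++ a :: b :: B) :=
          Nat.add_lt_add_left h1 _
        exact lt_of_lt_of_le this hM
      obtain ⟨d₁, hd₁⟩ := IH _ hlt₁ (A ++ b :: a :: B) le_rfl
      -- the shorter lists
      have hstep : ∀ k : ι, (A ++ k :: B).length ^ 3 + invCount (A ++ k :: B) < n := by
        intro k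
        have h2 : invCount (A ++ k :: B) ≤ (A ++ k :: B).length * (A ++ k :: B).length :=
          invCount_le_sq _
        have hl1 : (A ++ k :: B).length + 1 = ℓ := by
          simp [hℓ, List.length_append]
          omega
        set p := (A ++ k :: B).length with hp
        have hcube : p ^ 3 + p * p < (p + 1) ^ 3 := by nlinarith
        calc p ^ 3 + invCount (A ++ k :: B) ≤ p ^ 3 + p * p := by omega
          _ < (p + 1) ^ 3 := hcube
          _ = ℓ ^ 3 := by rw [hl1]
          _ ≤ ℓ ^ 3 + invCount (A ++ a :: b :: B) := Nat.le_add_right _ _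
          _ ≤ n := hM
      have hDk := fun k : ι => IH _ (hstep k) (A ++ k :: B) le_rfl
      set D : ι → (ι → ℕ) → ℝ := fun k => (hDk k).choose with hD
      have hDspec : ∀ (k : ι) (φ : G → ℂ), C.IsSmooth φ → ∀ g : G,
          opL Dop (A ++ k :: B) φ g =
            ∑ β ∈ mSet ι (A ++ k :: B).length, D k β • opL Dop (canonWord β) φ g :=
        fun k => (hDk k).choose_spec
      have hlenk : ∀ k : ι, (A ++ k :: B).length = A.length + B.length + 1 := by
        intro k; simp [List.length_append]
        omega
      -- the final coefficients
      refine ⟨fun β => d₁ β + ∑ k, γ a b k *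
        (if β ∈ mSet ι (A.length + B.length + 1) then D k β else 0), fun φ hφ g => ?_⟩
      -- notation
      set ψ : G → ℂ := opL Dop B φ with hψdef
      have hψ : C.IsSmooth ψ := opL_smooth C Dop hS B φ hφ
      have hsm_ba : C.IsSmooth (Dop b (Dop a ψ)) := hS b _ (hS a _ hψ)
      have hsm_sum : C.IsSmooth (fun g => ∑ k, γ a b k • Dop k ψ g) :=
        C.isSmooth_sum Finset.univ _ _ (fun k _ => hS k _ hψ)
      -- decompose
      have key : opL Dop (A ++ a :: b :: B) φ =
          opL Dop A (Dop b (Dop a ψ) + fun g => ∑ k, γ a b k • Dop k ψ g) := by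
        rw [opL_append, opL_cons, opL_cons, ← hψdef, hC a b ψ hψ]
      rw [key, opL_add C Dop hS hA A _ _ hsm_ba hsm_sum]
      have keyswap : opL Dop A (Dop b (Dop a ψ)) = opL Dop (A ++ b :: a :: B) φ := by
        rw [opL_append, opL_cons, opL_cons]
      have keysum : opL Dop A (fun g => ∑ k, γ a b k • Dop k ψ g) =
          fun g => ∑ k, γ a b k • opL Dop (A ++ k :: B) φ g := by
        rw [opL_sum C Dop hS hA hH A Finset.univ _ _ (fun k _ => hS k _ hψ)]
        funext g'
        refine Finset.sum_congr rfl fun k _ => ?_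
        rw [opL_append, opL_cons]
      show opL Dop A (Dop b (Dop a ψ)) g + opL Dop A (fun g => ∑ k, γ a b k • Dop k ψ g) g = _
      simp only [hlen₁] at hd₁
      have keysum' : opL Dop A (fun g => ∑ k, γ a b k • Dop k ψ g) g =
          ∑ k : ι, γ a b k • opL Dop (A ++ k :: B) φ g := by
        rw [keysum]
      rw [keyswap, keysum', hd₁ φ hφ g]
      have hext : ∀ k : ι, opL Dop (A ++ k :: B) φ g =
          ∑ β ∈ mSet ι ℓ, (if β ∈ mSet ι (A.length + B.length + 1) then D k β else 0) •
            opL Dop (canonWord β) φ g := by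
        intro k
        rw [hDspec k φ hφ g, hlenk k]
        have hsub : mSet ι (A.length + B.length + 1) ⊆ mSet ι ℓ :=
          mSet_mono (by omega)
        rw [show (∑ β ∈ mSet ι ℓ,
            (if β ∈ mSet ι (A.length + B.length + 1) then D k β else 0) •
              opL Dop (canonWord β) φ g) =
            ∑ β ∈ mSet ι (A.length + B.length + 1),
            (if β ∈ mSet ι (A.length + B.length + 1) then D k β else 0) •
              opL Dop (canonWord β) φ g from
          (Finset.sum_subset hsub (fun β _ hβ => by rw [if_neg hβ, zero_smul])).symm]
        exact Finset.sum_congr rfl fun β hβ => by rw [if_pos hβ]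
      have hterm : ∀ k : ι, γ a b k • opL Dop (A ++ k :: B) φ g =
          ∑ β ∈ mSet ι ℓ, (γ a b k *
            (if β ∈ mSet ι (A.length + B.length + 1) then D k β else 0)) •
              opL Dop (canonWord β) φ g := by
        intro k
        rw [hext k, Finset.smul_sum]
        exact Finset.sum_congr rfl fun β _ => smul_smul _ _ _
      rw [Finset.sum_congr rfl (fun k _ => hterm k), Finset.sum_comm,
        ← Finset.sum_add_distrib]
      exact Finset.sum_congr rfl fun β _ => by rw [add_smul, Finset.sum_smul]

end Hyps

end Generic

section Expand

/-- the snoc equivalence -/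
def snocEquiv (ι : Type*) (n : ℕ) : ι × (Fin n → ι) ≃ (Fin (n + 1) → ι) where
  toFun p := Fin.snoc p.2 p.1
  invFun f := (f (Fin.last n), fun k => f k.castSucc)
  left_inv p := by
    cases p with
    | mk j f =>
        simp only [Fin.snoc_last]
        exact congrArg (Prod.mk j) (funext fun k => Fin.snoc_castSucc _ _ _)
  right_inv f := by
    funext k
    cases k using Fin.lastCases with
    | last => simp [Fin.snoc_last]
    | cast k => simp [Fin.snoc_castSucc]

lemma ofFn_snoc' {ι : Type*} {n : ℕ} (f : Fin n → ι) (j : ι) :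
    List.ofFn (Fin.snoc f j) = List.ofFn f ++ [j] := by
  rw [List.ofFn_succ', List.concat_eq_append]
  congr 1
  · congr 1
    funext i
    exact Fin.snoc_castSucc _ _ _
  · rw [Fin.snoc_last]

variable {𝕖 𝕟 : Type*} [NormedAddCommGroup 𝕖] [NormedSpace ℝ 𝕖]
  [NormedAddCommGroup 𝕟] [NormedSpace ℝ 𝕟] {ι : Type*} [Fintype ι] [LinearOrder ι]
  {G : Type*} [Group G] [TopologicalSpace G] [IsTopologicalGroup G]
  [MeasurableSpace G] [BorelSpace G]

variable (C : SolvCtx 𝕖 𝕟 ι G)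

lemma comm_opL (Aop Bop : ι → (G → ℂ) → G → ℂ)
    (hAS : ∀ (i : ι) (φ : G → ℂ), C.IsSmooth φ → C.IsSmooth (Aop i φ))
    (hcm : ∀ (i j : ι) (φ : G → ℂ), C.IsSmooth φ → Bop j (Aop i φ) = Aop i (Bop j φ))
    (L : List ι) (j : ι) (φ : G → ℂ) (hφ : C.IsSmooth φ) :
    Bop j (opL Aop L φ) = opL Aop L (Bop j φ) := by
  induction L with
  | nil => rfl
  | cons i L ih =>
      rw [opL_cons, hcm i j _ (opL_smooth C Aop hAS L φ hφ), ih, opL_cons]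

lemma expand_cross (Aop Bop : ι → (G → ℂ) → G → ℂ) (ω : G → ℝ) (K : ℝ)
    (coef : ι → ι → G → ℝ)
    (hAS : ∀ (i : ι) (φ : G → ℂ), C.IsSmooth φ → C.IsSmooth (Aop i φ))
    (hBS : ∀ (i : ι) (φ : G → ℂ), C.IsSmooth φ → C.IsSmooth (Bop i φ))
    (hωnn : ∀ g, 0 ≤ ω g) (hK : 0 < K)
    (hcoef : ∀ i j g, |coef i j g| ≤ K * ω g)
    (hexp : ∀ (i : ι) (φ : G → ℂ), C.IsSmooth φ → ∀ g,
      Aop i φ g = ∑ j, coef i j g • Bop j φ g)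
    (hcm : ∀ (i j : ι) (φ : G → ℂ), C.IsSmooth φ → Bop j (Aop i φ) = Aop i (Bop j φ)) :
    ∀ L : List ι, ∃ K' > (0 : ℝ), ∀ (φ : G → ℂ), C.IsSmooth φ → ∀ g : G,
      ‖opL Aop L φ g‖ ≤ K' * ω g ^ L.length *
        ∑ f : Fin L.length → ι, ‖opL Bop (List.ofFn f) φ g‖ := by
  intro L
  induction L with
  | nil =>
      refine ⟨1, one_pos, fun φ hφ g => ?_⟩
      haveI : Unique (Fin ([] : List ι).length → ι) :=
        ⟨⟨fun k => k.elim0⟩, fun f => funext fun k => k.elim0⟩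
      have h1 : (∑ f : Fin ([] : List ι).length → ι, ‖opL Bop (List.ofFn f) φ g‖) =
          ‖φ g‖ := by
        rw [Finset.univ_unique, Finset.sum_singleton]
        have h2 : List.ofFn (default : Fin ([] : List ι).length → ι) = [] :=
          List.ofFn_zero
        rw [h2]
        rfl
      have h3 : (1 : ℝ) * ω g ^ ([] : List ι).length * ‖φ g‖ = ‖φ g‖ := by norm_num
      rw [h1, h3]
      exact le_of_eq rfl
  | cons i L ih =>
      obtain ⟨K', hK', hIH⟩ := ih
      refine ⟨K * K', by positivity, fun φ hφ g => ?_⟩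
      have hsm : C.IsSmooth (opL Aop L φ) := opL_smooth C Aop hAS L φ hφ
      have h0 : opL Aop (i :: L) φ g = ∑ j, coef i j g • Bop j (opL Aop L φ) g :=
        hexp i _ hsm g
      have hcomm' : ∀ j, Bop j (opL Aop L φ) = opL Aop L (Bop j φ) :=
        fun j => comm_opL C Aop Bop hAS hcm L j φ hφ
      calc ‖opL Aop (i :: L) φ g‖
          = ‖∑ j, coef i j g • Bop j (opL Aop L φ) g‖ := by rw [h0]
        _ ≤ ∑ j, ‖coef i j g • Bop j (opL Aop L φ) g‖ := norm_sum_le _ _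
        _ = ∑ j, |coef i j g| * ‖opL Aop L (Bop j φ) g‖ := by
            refine Finset.sum_congr rfl fun j _ => ?_
            rw [norm_smul, Real.norm_eq_abs, hcomm' j]
        _ ≤ ∑ j, (K * ω g) * (K' * ω g ^ L.length *
              ∑ f : Fin L.length → ι, ‖opL Bop (List.ofFn f) (Bop j φ) g‖) := by
            refine Finset.sum_le_sum fun j _ => ?_
            exact mul_le_mul (hcoef i j g) (hIH (Bop j φ) (hBS j φ hφ) g)
              (norm_nonneg _) (mul_nonneg hK.le (hωnn g))
        _ = (K * K') * ω g ^ (L.length + 1) *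
              ∑ j, ∑ f : Fin L.length → ι, ‖opL Bop (List.ofFn f ++ [j]) φ g‖ := by
            rw [Finset.mul_sum]
            refine Finset.sum_congr rfl fun j _ => ?_
            have hin : (∑ f : Fin L.length → ι, ‖opL Bop (List.ofFn f) (Bop j φ) g‖) =
                ∑ f : Fin L.length → ι, ‖opL Bop (List.ofFn f ++ [j]) φ g‖ := by
              refine Finset.sum_congr rfl fun f _ => ?_
              rw [opL_append]
              rfl
            rw [hin]
            ring
        _ = (K * K') * ω g ^ (i :: L).length *
              ∑ f' : Fin (i :: L).length → ι, ‖opL Bop (List.ofFn f') φ g‖ := by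
            have hbij : (∑ j, ∑ f : Fin L.length → ι, ‖opL Bop (List.ofFn f ++ [j]) φ g‖)
                = ∑ f' : Fin (L.length + 1) → ι, ‖opL Bop (List.ofFn f') φ g‖ := by
              have e1 : (∑ p : ι × (Fin L.length → ι),
                  ‖opL Bop (List.ofFn p.2 ++ [p.1]) φ g‖)
                  = ∑ j, ∑ f : Fin L.length → ι, ‖opL Bop (List.ofFn f ++ [j]) φ g‖ :=
                Fintype.sum_prod_type (fun p : ι × (Fin L.length → ι) =>
                  ‖opL Bop (List.ofFn p.2 ++ [p.1]) φ g‖)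
              rw [← e1]
              refine Fintype.sum_equiv (snocEquiv ι L.length) _ _ fun p => ?_
              have h4 : List.ofFn (Fin.snoc p.2 p.1) = List.ofFn p.2 ++ [p.1] := ofFn_snoc' _ _
              rw [show snocEquiv ι L.length p = Fin.snoc p.2 p.1 from rfl, h4]
            rw [hbij]
            rfl

end Expand

namespace SolvCtx

variable {𝕖 𝕟 : Type*} [NormedAddCommGroup 𝕖] [NormedSpace ℝ 𝕖]
  [NormedAddCommGroup 𝕟] [NormedSpace ℝ 𝕟] {ι : Type*} [Fintype ι]
  {G : Type*} [Group G] [TopologicalSpace G] [IsTopologicalGroup G]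
  [MeasurableSpace G] [BorelSpace G]

variable (C : SolvCtx 𝕖 𝕟 ι G)

/-- the Ad-part of the weight -/
def omg (g : G) : ℝ := max ‖C.Ad g‖ ‖C.Ad g⁻¹‖

lemma omg_nonneg (g : G) : 0 ≤ C.omg g := le_trans (norm_nonneg _) (le_max_left _ _)

lemma sigma_nonneg (g : G) : 0 ≤ C.sigma g := by
  rw [sigma]
  apply mul_nonneg (C.omg_nonneg g)
  positivity

lemma omg_le_sigma (g : G) : C.omg g ≤ C.sigma g := by
  rw [sigma]
  have h1 : (1 : ℝ) ≤ 1 + (C.lenG g : ℝ) + (C.lenN (C.nPart g) : ℝ) := by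
    have := Nat.cast_nonneg (α := ℝ) (C.lenG g)
    have := Nat.cast_nonneg (α := ℝ) (C.lenN (C.nPart g))
    linarith
  exact le_mul_of_one_le_right (C.omg_nonneg g) h1

lemma norm_Ad_le_omg (g : G) : ‖C.Ad g‖ ≤ C.omg g := le_max_left _ _

lemma norm_Ad_inv_le_omg (g : G) : ‖C.Ad g⁻¹‖ ≤ C.omg g := le_max_right _ _

lemma exists_coef_bound_r :
    ∃ K > (0 : ℝ), ∀ (i j : ι) (g : G), |C.bas.repr (C.Ad g⁻¹ (C.vv i)) j| ≤ K * C.omg g := by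
  obtain ⟨K0, hK0, hrepr⟩ := C.exists_repr_bound
  set V : ℝ := (∑ i, ‖C.vv i‖) + 1 with hV
  have hVpos : 0 < V := by
    have : (0 : ℝ) ≤ ∑ i, ‖C.vv i‖ := Finset.sum_nonneg fun i _ => norm_nonneg _
    simp only [hV]; linarith
  have hvle : ∀ i : ι, ‖C.vv i‖ ≤ V := by
    intro i
    have h1 : ‖C.vv i‖ ≤ ∑ i', ‖C.vv i'‖ :=
      Finset.single_le_sum (fun i' _ => norm_nonneg _) (Finset.mem_univ i)
    simp only [hV]; linarith
  refine ⟨K0 * V, by positivity, fun i j g => ?_⟩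
  calc |C.bas.repr (C.Ad g⁻¹ (C.vv i)) j| ≤ K0 * ‖C.Ad g⁻¹ (C.vv i)‖ := hrepr _ j
    _ ≤ K0 * (‖C.Ad g⁻¹‖ * ‖C.vv i‖) :=
        mul_le_mul_of_nonneg_left ((C.Ad g⁻¹).le_opNorm _) hK0.le
    _ ≤ K0 * (C.omg g * V) := by
        apply mul_le_mul_of_nonneg_left _ hK0.le
        exact mul_le_mul (C.norm_Ad_inv_le_omg g) (hvle i) (norm_nonneg _) (C.omg_nonneg g)
    _ = K0 * V * C.omg g := by ring

lemma exists_coef_bound_l :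
    ∃ K > (0 : ℝ), ∀ (i j : ι) (g : G), |C.bas.repr (C.Ad g (C.vv i)) j| ≤ K * C.omg g := by
  obtain ⟨K0, hK0, hrepr⟩ := C.exists_repr_bound
  set V : ℝ := (∑ i, ‖C.vv i‖) + 1 with hV
  have hVpos : 0 < V := by
    have : (0 : ℝ) ≤ ∑ i, ‖C.vv i‖ := Finset.sum_nonneg fun i _ => norm_nonneg _
    simp only [hV]; linarith
  have hvle : ∀ i : ι, ‖C.vv i‖ ≤ V := by
    intro i
    have h1 : ‖C.vv i‖ ≤ ∑ i', ‖C.vv i'‖ :=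
      Finset.single_le_sum (fun i' _ => norm_nonneg _) (Finset.mem_univ i)
    simp only [hV]; linarith
  refine ⟨K0 * V, by positivity, fun i j g => ?_⟩
  calc |C.bas.repr (C.Ad g (C.vv i)) j| ≤ K0 * ‖C.Ad g (C.vv i)‖ := hrepr _ j
    _ ≤ K0 * (‖C.Ad g‖ * ‖C.vv i‖) :=
        mul_le_mul_of_nonneg_left ((C.Ad g).le_opNorm _) hK0.le
    _ ≤ K0 * (C.omg g * V) := by
        apply mul_le_mul_of_nonneg_left _ hK0.le
        exact mul_le_mul (C.norm_Ad_le_omg g) (hvle i) (norm_nonneg _) (C.omg_nonneg g)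
    _ = K0 * V * C.omg g := by ring

end SolvCtx

section Bundles

variable {𝕖 𝕟 : Type*} [NormedAddCommGroup 𝕖] [NormedSpace ℝ 𝕖]
  [NormedAddCommGroup 𝕟] [NormedSpace ℝ 𝕟] {ι : Type*} [Fintype ι]
  {G : Type*} [Group G] [TopologicalSpace G] [IsTopologicalGroup G]
  [MeasurableSpace G] [BorelSpace G]

variable (C : SolvCtx 𝕖 𝕟 ι G)

lemma hSl : ∀ (i : ι) (φ : G → ℂ), C.IsSmooth φ → C.IsSmooth (lieDeriv (C.c i) φ) :=
  fun i φ hφ => C.isSmooth_lieDeriv hφ i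

lemma hSr : ∀ (i : ι) (φ : G → ℂ), C.IsSmooth φ → C.IsSmooth (rieDeriv (C.c i) φ) :=
  fun i φ hφ => C.isSmooth_rieDeriv hφ i

lemma hAl : ∀ (i : ι) (φ ψ : G → ℂ), C.IsSmooth φ → C.IsSmooth ψ →
    lieDeriv (C.c i) (φ + ψ) = lieDeriv (C.c i) φ + lieDeriv (C.c i) ψ :=
  fun i φ ψ hφ hψ => C.lieDeriv_add hφ hψ i

lemma hAr : ∀ (i : ι) (φ ψ : G → ℂ), C.IsSmooth φ → C.IsSmooth ψ →
    rieDeriv (C.c i) (φ + ψ) = rieDeriv (C.c i) φ + rieDeriv (C.c i) ψ :=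
  fun i φ ψ hφ hψ => C.rieDeriv_add hφ hψ i

lemma hHl : ∀ (i : ι) (r : ℝ) (φ : G → ℂ), C.IsSmooth φ →
    lieDeriv (C.c i) (r • φ) = r • lieDeriv (C.c i) φ :=
  fun i r φ hφ => C.lieDeriv_smul r hφ i

lemma hHr : ∀ (i : ι) (r : ℝ) (φ : G → ℂ), C.IsSmooth φ →
    rieDeriv (C.c i) (r • φ) = r • rieDeriv (C.c i) φ :=
  fun i r φ hφ => C.rieDeriv_smul r hφ i

lemma hCl : ∀ (i j : ι) (φ : G → ℂ), C.IsSmooth φ →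
    lieDeriv (C.c i) (lieDeriv (C.c j) φ) = lieDeriv (C.c j) (lieDeriv (C.c i) φ) +
      fun g => ∑ k, C.gammaL i j k • lieDeriv (C.c k) φ g :=
  fun i j φ hφ => funext fun g => C.lie_comm_rel hφ i j g

lemma hCr : ∀ (i j : ι) (φ : G → ℂ), C.IsSmooth φ →
    rieDeriv (C.c i) (rieDeriv (C.c j) φ) = rieDeriv (C.c j) (rieDeriv (C.c i) φ) +
      fun g => ∑ k, C.gammaR i j k • rieDeriv (C.c k) φ g :=
  fun i j φ hφ => funext fun g => C.rie_comm_rel hφ i j g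

lemma hCMrl : ∀ (i j : ι) (φ : G → ℂ), C.IsSmooth φ →
    lieDeriv (C.c j) (rieDeriv (C.c i) φ) = rieDeriv (C.c i) (lieDeriv (C.c j) φ) :=
  fun i j φ hφ => funext fun g => C.lie_rie_comm hφ i j g

lemma hCMlr : ∀ (i j : ι) (φ : G → ℂ), C.IsSmooth φ →
    rieDeriv (C.c j) (lieDeriv (C.c i) φ) = lieDeriv (C.c i) (rieDeriv (C.c j) φ) :=
  fun i j φ hφ => funext fun g => (C.lie_rie_comm hφ j i g).symm

end Bundles

section Pointwise

variable {𝕖 𝕟 : Type*} [NormedAddCommGroup 𝕖] [NormedSpace ℝ 𝕖]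
  [NormedAddCommGroup 𝕟] [NormedSpace ℝ 𝕟] {ι : Type*} [Fintype ι] [LinearOrder ι]
  {G : Type*} [Group G] [TopologicalSpace G] [IsTopologicalGroup G]
  [MeasurableSpace G] [BorelSpace G]

variable (C : SolvCtx 𝕖 𝕟 ι G)

set_option maxHeartbeats 2000000 in
/-- pointwise bound: right-invariant monomials by left-invariant canonical monomials -/
lemma pointwise_dir1 (k : ℕ) (α : ι → ℕ) :
    ∃ C₁ > (0 : ℝ), ∀ (φ : G → ℂ), C.IsSmooth φ → ∀ g : G,
      C.sigma g ^ k * ‖C.XopR α φ g‖ ≤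
        C₁ * ∑ β ∈ mSet ι (canonWord α).length,
          C.sigma g ^ (k + (canonWord α).length) * ‖C.Xop β φ g‖ := by
  classical
  set L : List ι := canonWord α with hL
  set ℓ : ℕ := L.length with hℓ
  obtain ⟨K, hK, hcoefb⟩ := C.exists_coef_bound_r
  obtain ⟨K', hK', hEXP⟩ := expand_cross C (fun i => rieDeriv (C.c i))
    (fun i => lieDeriv (C.c i)) C.omg K
    (fun i j g => C.bas.repr (C.Ad g⁻¹ (C.vv i)) j)
    (hSr C) (hSl C) C.omg_nonneg hK (fun i j g => hcoefb i j g)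
    (fun i φ hφ g => C.rieDeriv_expand hφ i g) (hCMrl C) L
  have hPBW := fun f : Fin ℓ → ι =>
    pbw_expand C (fun i => lieDeriv (C.c i)) C.gammaL (hSl C) (hAl C) (hHl C) (hCl C)
      (List.ofFn f)
  set d : (Fin ℓ → ι) → (ι → ℕ) → ℝ := fun f => (hPBW f).choose with hdd
  have hd : ∀ (f : Fin ℓ → ι) (φ : G → ℂ), C.IsSmooth φ → ∀ g : G,
      opL (fun i => lieDeriv (C.c i)) (List.ofFn f) φ g =
        ∑ β ∈ mSet ι ℓ, d f β • opL (fun i => lieDeriv (C.c i)) (canonWord β) φ g := by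
    intro f φ hφ g
    have hthis := (hPBW f).choose_spec φ hφ g
    have hms : mSet ι (List.ofFn f).length = mSet ι ℓ := by rw [List.length_ofFn]
    exact hthis.trans (Finset.sum_congr hms fun _ _ => rfl)
  set Dsum : ℝ := (∑ f : Fin ℓ → ι, ∑ β ∈ mSet ι ℓ, |d f β|) + 1 with hDs
  have hDpos : 0 < Dsum := by
    have : (0 : ℝ) ≤ ∑ f : Fin ℓ → ι, ∑ β ∈ mSet ι ℓ, |d f β| :=
      Finset.sum_nonneg fun f _ => Finset.sum_nonneg fun β _ => abs_nonneg _
    simp only [hDs]; linarith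
  refine ⟨K' * Dsum, by positivity, fun φ hφ g => ?_⟩
  have hσn : (0 : ℝ) ≤ C.sigma g := C.sigma_nonneg g
  -- step 1 : expansion of the right-invariant monomial
  have h1 : ‖C.XopR α φ g‖ ≤ K' * C.omg g ^ ℓ *
      ∑ f : Fin ℓ → ι, ‖opL (fun i => lieDeriv (C.c i)) (List.ofFn f) φ g‖ := by
    rw [C.XopR_eq_opL α φ]
    exact hEXP φ hφ g
  -- step 2 : reorder each left-invariant monomial
  have h2 : ∀ f : Fin ℓ → ι, ‖opL (fun i => lieDeriv (C.c i)) (List.ofFn f) φ g‖ ≤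
      ∑ β ∈ mSet ι ℓ, |d f β| * ‖C.Xop β φ g‖ := by
    intro f
    rw [hd f φ hφ g]
    refine (norm_sum_le _ _).trans ?_
    refine le_of_eq (Finset.sum_congr rfl fun β _ => ?_)
    rw [norm_smul, Real.norm_eq_abs, C.Xop_eq_opL]
  have h3 : (∑ f : Fin ℓ → ι, ‖opL (fun i => lieDeriv (C.c i)) (List.ofFn f) φ g‖) ≤
      Dsum * ∑ β ∈ mSet ι ℓ, ‖C.Xop β φ g‖ := by
    calc (∑ f : Fin ℓ → ι, ‖opL (fun i => lieDeriv (C.c i)) (List.ofFn f) φ g‖)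
        ≤ ∑ f : Fin ℓ → ι, ∑ β ∈ mSet ι ℓ, |d f β| * ‖C.Xop β φ g‖ :=
          Finset.sum_le_sum fun f _ => h2 f
      _ = ∑ β ∈ mSet ι ℓ, (∑ f : Fin ℓ → ι, |d f β|) * ‖C.Xop β φ g‖ := by
          rw [Finset.sum_comm]
          exact Finset.sum_congr rfl fun β _ => (Finset.sum_mul _ _ _).symm
      _ ≤ ∑ β ∈ mSet ι ℓ, Dsum * ‖C.Xop β φ g‖ := by
          refine Finset.sum_le_sum fun β hβ => ?_
          apply mul_le_mul_of_nonneg_right _ (norm_nonneg _)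
          calc (∑ f : Fin ℓ → ι, |d f β|) ≤
              ∑ f : Fin ℓ → ι, ∑ β' ∈ mSet ι ℓ, |d f β'| :=
                Finset.sum_le_sum fun f' _ =>
                  Finset.single_le_sum (f := fun β' => |d f' β'|)
                    (fun β' _ => abs_nonneg _) hβ
            _ ≤ Dsum := by simp only [hDs]; linarith
      _ = Dsum * ∑ β ∈ mSet ι ℓ, ‖C.Xop β φ g‖ := (Finset.mul_sum _ _ _).symm
  calc C.sigma g ^ k * ‖C.XopR α φ g‖
      ≤ C.sigma g ^ k * (K' * C.omg g ^ ℓ *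
          ∑ f : Fin ℓ → ι, ‖opL (fun i => lieDeriv (C.c i)) (List.ofFn f) φ g‖) :=
        mul_le_mul_of_nonneg_left h1 (pow_nonneg hσn k)
    _ ≤ C.sigma g ^ k * (K' * C.omg g ^ ℓ * (Dsum * ∑ β ∈ mSet ι ℓ, ‖C.Xop β φ g‖)) := by
        apply mul_le_mul_of_nonneg_left _ (pow_nonneg hσn k)
        exact mul_le_mul_of_nonneg_left h3
          (mul_nonneg hK'.le (pow_nonneg (C.omg_nonneg g) ℓ))
    _ = (K' * Dsum) * ∑ β ∈ mSet ι ℓ, (C.sigma g ^ k * C.omg g ^ ℓ) * ‖C.Xop β φ g‖ := by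
        simp only [Finset.mul_sum]
        exact Finset.sum_congr rfl fun β _ => by ring
    _ ≤ (K' * Dsum) * ∑ β ∈ mSet ι ℓ, C.sigma g ^ (k + ℓ) * ‖C.Xop β φ g‖ := by
        apply mul_le_mul_of_nonneg_left _ (by positivity)
        refine Finset.sum_le_sum fun β _ => ?_
        apply mul_le_mul_of_nonneg_right _ (norm_nonneg _)
        rw [pow_add]
        apply mul_le_mul_of_nonneg_left _ (pow_nonneg hσn k)
        exact pow_le_pow_left₀ (C.omg_nonneg g) (C.omg_le_sigma g) ℓ

set_option maxHeartbeats 2000000 in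
/-- pointwise bound: left-invariant monomials by right-invariant canonical monomials -/
lemma pointwise_dir2 (k : ℕ) (α : ι → ℕ) :
    ∃ C₁ > (0 : ℝ), ∀ (φ : G → ℂ), C.IsSmooth φ → ∀ g : G,
      C.sigma g ^ k * ‖C.Xop α φ g‖ ≤
        C₁ * ∑ β ∈ mSet ι (canonWord α).length,
          C.sigma g ^ (k + (canonWord α).length) * ‖C.XopR β φ g‖ := by
  classical
  set L : List ι := canonWord α with hL
  set ℓ : ℕ := L.length with hℓ
  obtain ⟨K, hK, hcoefb⟩ := C.exists_coef_bound_l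
  obtain ⟨K', hK', hEXP⟩ := expand_cross C (fun i => lieDeriv (C.c i))
    (fun i => rieDeriv (C.c i)) C.omg K
    (fun i j g => C.bas.repr (C.Ad g (C.vv i)) j)
    (hSl C) (hSr C) C.omg_nonneg hK (fun i j g => hcoefb i j g)
    (fun i φ hφ g => C.lieDeriv_expand hφ i g) (hCMlr C) L
  have hPBW := fun f : Fin ℓ → ι =>
    pbw_expand C (fun i => rieDeriv (C.c i)) C.gammaR (hSr C) (hAr C) (hHr C) (hCr C)
      (List.ofFn f)
  set d : (Fin ℓ → ι) → (ι → ℕ) → ℝ := fun f => (hPBW f).choose with hdd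
  have hd : ∀ (f : Fin ℓ → ι) (φ : G → ℂ), C.IsSmooth φ → ∀ g : G,
      opL (fun i => rieDeriv (C.c i)) (List.ofFn f) φ g =
        ∑ β ∈ mSet ι ℓ, d f β • opL (fun i => rieDeriv (C.c i)) (canonWord β) φ g := by
    intro f φ hφ g
    have hthis := (hPBW f).choose_spec φ hφ g
    have hms : mSet ι (List.ofFn f).length = mSet ι ℓ := by rw [List.length_ofFn]
    exact hthis.trans (Finset.sum_congr hms fun _ _ => rfl)
  set Dsum : ℝ := (∑ f : Fin ℓ → ι, ∑ β ∈ mSet ι ℓ, |d f β|) + 1 with hDs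
  have hDpos : 0 < Dsum := by
    have : (0 : ℝ) ≤ ∑ f : Fin ℓ → ι, ∑ β ∈ mSet ι ℓ, |d f β| :=
      Finset.sum_nonneg fun f _ => Finset.sum_nonneg fun β _ => abs_nonneg _
    simp only [hDs]; linarith
  refine ⟨K' * Dsum, by positivity, fun φ hφ g => ?_⟩
  have hσn : (0 : ℝ) ≤ C.sigma g := C.sigma_nonneg g
  have h1 : ‖C.Xop α φ g‖ ≤ K' * C.omg g ^ ℓ *
      ∑ f : Fin ℓ → ι, ‖opL (fun i => rieDeriv (C.c i)) (List.ofFn f) φ g‖ := by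
    rw [C.Xop_eq_opL α φ]
    exact hEXP φ hφ g
  have h2 : ∀ f : Fin ℓ → ι, ‖opL (fun i => rieDeriv (C.c i)) (List.ofFn f) φ g‖ ≤
      ∑ β ∈ mSet ι ℓ, |d f β| * ‖C.XopR β φ g‖ := by
    intro f
    rw [hd f φ hφ g]
    refine (norm_sum_le _ _).trans ?_
    refine le_of_eq (Finset.sum_congr rfl fun β _ => ?_)
    rw [norm_smul, Real.norm_eq_abs, C.XopR_eq_opL]
  have h3 : (∑ f : Fin ℓ → ι, ‖opL (fun i => rieDeriv (C.c i)) (List.ofFn f) φ g‖) ≤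
      Dsum * ∑ β ∈ mSet ι ℓ, ‖C.XopR β φ g‖ := by
    calc (∑ f : Fin ℓ → ι, ‖opL (fun i => rieDeriv (C.c i)) (List.ofFn f) φ g‖)
        ≤ ∑ f : Fin ℓ → ι, ∑ β ∈ mSet ι ℓ, |d f β| * ‖C.XopR β φ g‖ :=
          Finset.sum_le_sum fun f _ => h2 f
      _ = ∑ β ∈ mSet ι ℓ, (∑ f : Fin ℓ → ι, |d f β|) * ‖C.XopR β φ g‖ := by
          rw [Finset.sum_comm]
          exact Finset.sum_congr rfl fun β _ => (Finset.sum_mul _ _ _).symm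
      _ ≤ ∑ β ∈ mSet ι ℓ, Dsum * ‖C.XopR β φ g‖ := by
          refine Finset.sum_le_sum fun β hβ => ?_
          apply mul_le_mul_of_nonneg_right _ (norm_nonneg _)
          calc (∑ f : Fin ℓ → ι, |d f β|) ≤
              ∑ f : Fin ℓ → ι, ∑ β' ∈ mSet ι ℓ, |d f β'| :=
                Finset.sum_le_sum fun f' _ =>
                  Finset.single_le_sum (f := fun β' => |d f' β'|)
                    (fun β' _ => abs_nonneg _) hβ
            _ ≤ Dsum := by simp only [hDs]; linarith
      _ = Dsum * ∑ β ∈ mSet ι ℓ, ‖C.XopR β φ g‖ := (Finset.mul_sum _ _ _).symm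
  calc C.sigma g ^ k * ‖C.Xop α φ g‖
      ≤ C.sigma g ^ k * (K' * C.omg g ^ ℓ *
          ∑ f : Fin ℓ → ι, ‖opL (fun i => rieDeriv (C.c i)) (List.ofFn f) φ g‖) :=
        mul_le_mul_of_nonneg_left h1 (pow_nonneg hσn k)
    _ ≤ C.sigma g ^ k * (K' * C.omg g ^ ℓ * (Dsum * ∑ β ∈ mSet ι ℓ, ‖C.XopR β φ g‖)) := by
        apply mul_le_mul_of_nonneg_left _ (pow_nonneg hσn k)
        exact mul_le_mul_of_nonneg_left h3
          (mul_nonneg hK'.le (pow_nonneg (C.omg_nonneg g) ℓ))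
    _ = (K' * Dsum) * ∑ β ∈ mSet ι ℓ, (C.sigma g ^ k * C.omg g ^ ℓ) * ‖C.XopR β φ g‖ := by
        simp only [Finset.mul_sum]
        exact Finset.sum_congr rfl fun β _ => by ring
    _ ≤ (K' * Dsum) * ∑ β ∈ mSet ι ℓ, C.sigma g ^ (k + ℓ) * ‖C.XopR β φ g‖ := by
        apply mul_le_mul_of_nonneg_left _ (by positivity)
        refine Finset.sum_le_sum fun β _ => ?_
        apply mul_le_mul_of_nonneg_right _ (norm_nonneg _)
        rw [pow_add]
        apply mul_le_mul_of_nonneg_left _ (pow_nonneg hσn k)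
        exact pow_le_pow_left₀ (C.omg_nonneg g) (C.omg_le_sigma g) ℓ

end Pointwise


/-- **Proposition 10 (Proposition `autres_champs`).**
The seminorms `‖φ‖'^∞_{k,α} := ‖σ^k X̃^α φ‖_{L^∞}` built from the right-invariant
differential operators `X̃^α` are continuous seminorms on `S_σ(G)`, and they induce on
`S_σ(G)` the same topology as the defining seminorms `‖·‖^∞_{k,α}` built from
left-invariant derivatives: each family is dominated by finite combinations of the
other. -/
theorem right_invariant_seminorms_same_topology
    {𝕖 𝕟 : Type*} [NormedAddCommGroup 𝕖] [NormedSpace ℝ 𝕖]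
    [NormedAddCommGroup 𝕟] [NormedSpace ℝ 𝕟] {ι : Type*} [Fintype ι] [LinearOrder ι]
    {G : Type*} [Group G] [TopologicalSpace G] [IsTopologicalGroup G]
    [MeasurableSpace G] [BorelSpace G] (C : SolvCtx 𝕖 𝕟 ι G) :
    -- the right-invariant seminorms are continuous w.r.t. the left-invariant ones
    (∀ (k : ℕ) (α : ι → ℕ), ∃ C₀ > (0 : ℝ), ∃ s : Finset (ℕ × (ι → ℕ)),
      ∀ φ : G → ℂ, C.IsSchwartz φ →
        C.snormR k α φ ≤ C₀ * ∑ p ∈ s, C.snorm p.1 p.2 φ) ∧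
    -- and conversely, so the two families define the same topology
    (∀ (k : ℕ) (α : ι → ℕ), ∃ C₀ > (0 : ℝ), ∃ s : Finset (ℕ × (ι → ℕ)),
      ∀ φ : G → ℂ, C.IsSchwartz φ →
        C.snorm k α φ ≤ C₀ * ∑ p ∈ s, C.snormR p.1 p.2 φ) := by
  classical
  haveI : Nonempty G := ⟨1⟩
  constructor
  · -- direction 1
    intro k α
    obtain ⟨C₁, hC₁, hpt⟩ := pointwise_dir1 C k α
    set ℓ : ℕ := (canonWord α : List ι).length with hℓ
    refine ⟨C₁, hC₁, (mSet ι ℓ).image (fun β => ((k + ℓ : ℕ), β)), fun φ hφ => ?_⟩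
    have hφs : C.IsSmooth φ := hφ.1
    have himg : (∑ p ∈ (mSet ι ℓ).image (fun β => ((k + ℓ : ℕ), β)), C.snorm p.1 p.2 φ) =
        ∑ β ∈ mSet ι ℓ, C.snorm (k + ℓ) β φ := by
      rw [Finset.sum_image]
      intro x _ y _ h
      exact (Prod.ext_iff.mp h).2
    rw [himg]
    have key : ∀ g : G, C.sigma g ^ k * ‖C.XopR α φ g‖ ≤
        C₁ * ∑ β ∈ mSet ι ℓ, C.snorm (k + ℓ) β φ := by
      intro g
      refine (hpt φ hφs g).trans ?_
      apply mul_le_mul_of_nonneg_left _ hC₁.le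
      refine Finset.sum_le_sum fun β _ => ?_
      obtain ⟨B, hB⟩ := hφ.2 (k + ℓ) β
      have hbdd : BddAbove (Set.range fun g' : G =>
          C.sigma g' ^ (k + ℓ) * ‖C.Xop β φ g'‖) := by
        refine ⟨B, ?_⟩
        rintro _ ⟨g', rfl⟩
        exact hB g'
      exact le_ciSup hbdd g
    exact ciSup_le key
  · -- direction 2
    intro k α
    obtain ⟨C₂, hC₂, hpt2⟩ := pointwise_dir2 C k α
    set ℓ : ℕ := (canonWord α : List ι).length with hℓ
    refine ⟨C₂, hC₂, (mSet ι ℓ).image (fun β => ((k + ℓ : ℕ), β)), fun φ hφ => ?_⟩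
    have hφs : C.IsSmooth φ := hφ.1
    have himg : (∑ p ∈ (mSet ι ℓ).image (fun β => ((k + ℓ : ℕ), β)), C.snormR p.1 p.2 φ) =
        ∑ β ∈ mSet ι ℓ, C.snormR (k + ℓ) β φ := by
      rw [Finset.sum_image]
      intro x _ y _ h
      exact (Prod.ext_iff.mp h).2
    rw [himg]
    -- boundedness of the right-invariant families, via direction 1
    have hbddR : ∀ β : ι → ℕ, BddAbove (Set.range fun g' : G =>
        C.sigma g' ^ (k + ℓ) * ‖C.XopR β φ g'‖) := by
      intro β
      obtain ⟨C₃, hC₃, hpt3⟩ := pointwise_dir1 C (k + ℓ) β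
      set ℓβ : ℕ := (canonWord β : List ι).length with hℓβ
      set B' : ℝ := C₃ * ∑ β' ∈ mSet ι ℓβ, (hφ.2 ((k + ℓ) + ℓβ) β').choose with hB'
      refine ⟨B', ?_⟩
      rintro _ ⟨g', rfl⟩
      refine (hpt3 φ hφs g').trans ?_
      apply mul_le_mul_of_nonneg_left _ hC₃.le
      exact Finset.sum_le_sum fun β' _ => (hφ.2 ((k + ℓ) + ℓβ) β').choose_spec g'
    have key : ∀ g : G, C.sigma g ^ k * ‖C.Xop α φ g‖ ≤
        C₂ * ∑ β ∈ mSet ι ℓ, C.snormR (k + ℓ) β φ := by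
      intro g
      refine (hpt2 φ hφs g).trans ?_
      apply mul_le_mul_of_nonneg_left _ hC₂.le
      refine Finset.sum_le_sum fun β _ => ?_
      exact le_ciSup (hbddR β) g
    exact ciSup_le key
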